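/- arXiv:cs/0512023 — 7 statements merged into one kernel-verified Lean document; each statement's English description precedes it below -/
import Mathlib

section
/- Let M = 2^{s+2}, m = 2^s, ω = e^{2πi/M}, and for 0 ≤ i, k ≤ m−1 define the m×m matrix G_e = (1/√m)[ω^{i·5^k}]_{i,k}. Then G_e is unitary: G_e G_e† = I_m. -/
open Complex

lemma five_pow_two_pow (s : ℕ) : ∃ c : ℕ, Odd c ∧ 5 ^ (2 ^ s) = 1 + 2 ^ (s + 2) * c := by
  induction s with
  | zero => exact ⟨1, ⟨0, rfl⟩, by norm_num⟩
  | succ s ih =>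
    obtain ⟨c, hc, h⟩ := ih
    refine ⟨c + 2 ^ (s + 1) * c ^ 2, ?_, ?_⟩
    · obtain ⟨t, ht⟩ := hc
      exact ⟨t + 2 ^ s * c ^ 2, by subst ht; ring⟩
    · have h2 : 5 ^ (2 ^ (s + 1)) = (5 ^ (2 ^ s)) ^ 2 := by
        rw [← pow_mul, pow_succ, Nat.mul_comm]
      rw [h2, h]; ring

lemma key_sum (s : ℕ) : ∀ d : ℤ, ¬ ((2:ℤ) ^ s ∣ d) →
    ∑ k ∈ Finset.range (2 ^ s),
      Complex.exp (2 * Real.pi * I * ((d : ℂ) * 5 ^ k) / 2 ^ (s + 2)) = 0 := by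
  induction s with
  | zero => intro d hd; simp at hd
  | succ s ih =>
    intro d hd
    obtain ⟨c, hc, h5⟩ := five_pow_two_pow s
    have h5C : (5 : ℂ) ^ (2 ^ s) = 1 + 2 ^ (s + 2) * c := by
      have := congrArg (fun n : ℕ => (n : ℂ)) h5
      push_cast at this
      exact this
    have hsplit : (2:ℕ) ^ (s + 1) = 2 ^ s + 2 ^ s := by ring
    rw [hsplit, Finset.sum_range_add]
    have hpow : ∀ k : ℕ, (5:ℂ) ^ (2 ^ s + k) = (1 + 2 ^ (s + 2) * c) * 5 ^ k := by
      intro k; rw [pow_add, h5C]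
    by_cases h2 : (2:ℤ) ∣ d
    · -- even case
      obtain ⟨e, rfl⟩ := h2
      have he : ¬ ((2:ℤ) ^ s ∣ e) := by
        intro h; exact hd (by rw [pow_succ, mul_comm ((2:ℤ)^s) 2]; exact mul_dvd_mul_left 2 h)
      have hsum1 : ∑ k ∈ Finset.range (2 ^ s),
          Complex.exp (2 * Real.pi * I * (((2 * e : ℤ) : ℂ) * 5 ^ k) / 2 ^ (s + 1 + 2)) = 0 := by
        refine Eq.trans (Finset.sum_congr rfl fun k _ => ?_) (ih e he)
        congr 1
        push_cast
        rw [show ((2:ℂ)) ^ (s + 1 + 2) = 2 * 2 ^ (s + 2) from by ring]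
        field_simp
      have hsum2 : ∑ k ∈ Finset.range (2 ^ s),
          Complex.exp (2 * Real.pi * I * (((2 * e : ℤ) : ℂ) * 5 ^ (2 ^ s + k)) / 2 ^ (s + 1 + 2)) = 0 := by
        have hf : ¬ ((2:ℤ) ^ s ∣ e * 5 ^ (2 ^ s)) := by
          intro h
          have hcop : IsCoprime ((2:ℤ) ^ s) ((5:ℤ) ^ (2 ^ s)) := by
            apply IsCoprime.pow
            rw [Int.isCoprime_iff_gcd_eq_one]
            decide
          exact he (hcop.dvd_of_dvd_mul_right h)
        refine Eq.trans (Finset.sum_congr rfl fun k _ => ?_) (ih (e * 5 ^ (2 ^ s)) hf)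
        congr 1
        rw [pow_add]
        push_cast
        rw [show ((2:ℂ)) ^ (s + 1 + 2) = 2 * 2 ^ (s + 2) from by ring]
        field_simp
      rw [hsum1, hsum2, add_zero]
    · -- odd case: pointwise cancellation
      have hterm : ∀ k : ℕ,
          Complex.exp (2 * Real.pi * I * ((d : ℂ) * 5 ^ (2 ^ s + k)) / 2 ^ (s + 1 + 2))
            = - Complex.exp (2 * Real.pi * I * ((d : ℂ) * 5 ^ k) / 2 ^ (s + 1 + 2)) := by
        intro k
        have hodd : Odd (d * 5 ^ k * c) := by
          have hd' : Odd d := by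
            rw [Int.odd_iff]; omega
          exact (hd'.mul (Odd.pow (by decide : Odd (5:ℤ)))).mul
            (by exact_mod_cast hc)
        have hB : 2 * Real.pi * I * ((d : ℂ) * 5 ^ (2 ^ s + k)) / 2 ^ (s + 1 + 2)
            = 2 * Real.pi * I * ((d : ℂ) * 5 ^ k) / 2 ^ (s + 1 + 2)
              + ((d * 5 ^ k * c : ℤ) : ℂ) * (Real.pi * I) := by
          rw [hpow k]
          push_cast
          rw [show ((2:ℂ)) ^ (s + 1 + 2) = 2 * 2 ^ (s + 2) from by ring]
          field_simp
        rw [hB, Complex.exp_add, Complex.exp_int_mul, Complex.exp_pi_mul_I,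
          hodd.neg_one_zpow, mul_neg_one]
      rw [Finset.sum_congr rfl fun k _ => hterm k]
      simp

theorem canonical_embedding_matrix_unitary (s : ℕ)
    (ω : ℂ) (hω : ω = Complex.exp (2 * Real.pi * Complex.I / (2 ^ (s + 2) : ℕ)))
    (G : Matrix (Fin (2 ^ s)) (Fin (2 ^ s)) ℂ)
    (hG : ∀ i k : Fin (2 ^ s),
      G i k = (1 / Real.sqrt (2 ^ s)) * ω ^ ((i : ℕ) * 5 ^ (k : ℕ))) :
    G * G.conjTranspose = 1 := by
  have hm : (0:ℝ) < 2 ^ s := by positivity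
  have hr : (1 / (Real.sqrt (2 ^ s) : ℂ)) * (1 / (Real.sqrt (2 ^ s) : ℂ)) = 1 / (2:ℂ) ^ s := by
    rw [div_mul_div_comm, one_mul, ← Complex.ofReal_mul, Real.mul_self_sqrt hm.le]
    push_cast
    ring
  have hconjω : (starRingEnd ℂ) ω
      = Complex.exp (-(2 * Real.pi * Complex.I / (2 ^ (s + 2) : ℕ))) := by
    rw [hω, ← Complex.exp_conj]
    congr 1
    simp only [map_div₀, map_mul, map_pow, map_ofNat, Complex.conj_I, Complex.conj_ofReal,
      Complex.conj_natCast]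
    ring
  ext i j
  rw [Matrix.mul_apply]
  simp only [Matrix.conjTranspose_apply, Matrix.star_apply, star_def]
  have hterm : ∀ k : Fin (2 ^ s), G i k * (starRingEnd ℂ) (G j k)
      = (1 / (2:ℂ) ^ s) *
        Complex.exp (2 * Real.pi * I * ((((i:ℕ):ℤ) - ((j:ℕ):ℤ) : ℤ) * 5 ^ (k:ℕ)) / 2 ^ (s + 2)) := by
    intro k
    rw [hG i k, hG j k, map_mul, map_pow, map_div₀, map_one, Complex.conj_ofReal, hconjω, hω,
      ← Complex.exp_nat_mul, ← Complex.exp_nat_mul, mul_mul_mul_comm, hr, ← Complex.exp_add]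
    congr 2
    push_cast
    field_simp
    ring
  rw [Finset.sum_congr rfl fun k _ => hterm k, ← Finset.mul_sum]
  by_cases hij : i = j
  · subst hij
    have h1 : ∀ k : Fin (2 ^ s),
        Complex.exp (2 * Real.pi * I * ((((i:ℕ):ℤ) - ((i:ℕ):ℤ) : ℤ) * 5 ^ (k:ℕ)) / 2 ^ (s + 2))
          = 1 := by
      intro k
      rw [show ((((i:ℕ):ℤ) - ((i:ℕ):ℤ) : ℤ) : ℂ) = 0 by push_cast; ring]
      simp
    rw [Finset.sum_congr rfl fun k _ => h1 k, Matrix.one_apply_eq]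
    simp only [Finset.sum_const, Finset.card_univ, Fintype.card_fin, nsmul_eq_mul, mul_one]
    push_cast
    rw [one_div, inv_mul_cancel₀ (pow_ne_zero s two_ne_zero)]
  · have hd : ¬ ((2:ℤ) ^ s ∣ (((i:ℕ):ℤ) - ((j:ℕ):ℤ))) := by
      intro hdvd
      have h1 : ((i:ℕ):ℤ) < 2 ^ s := by exact_mod_cast i.isLt
      have h2 : ((j:ℕ):ℤ) < 2 ^ s := by exact_mod_cast j.isLt
      have hne : ((i:ℕ):ℤ) ≠ ((j:ℕ):ℤ) := by
        simp only [Ne, Int.natCast_inj]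
        exact fun h => hij (Fin.ext h)
      have habs : (2:ℤ) ^ s ≤ |((i:ℕ):ℤ) - ((j:ℕ):ℤ)| :=
        Int.le_of_dvd (abs_pos.mpr (sub_ne_zero.mpr hne)) ((dvd_abs _ _).mpr hdvd)
      have hlt : |((i:ℕ):ℤ) - ((j:ℕ):ℤ)| < 2 ^ s := by
        rw [abs_sub_lt_iff]
        omega
      omega
    have hk := key_sum s (((i:ℕ):ℤ) - ((j:ℕ):ℤ)) hd
    rw [show (∑ k : Fin (2 ^ s),
        Complex.exp (2 * Real.pi * I * ((((i:ℕ):ℤ) - ((j:ℕ):ℤ) : ℤ) * 5 ^ (k:ℕ)) / 2 ^ (s + 2)))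
        = ∑ k ∈ Finset.range (2 ^ s),
        Complex.exp (2 * Real.pi * I * (((((i:ℕ):ℤ) - ((j:ℕ):ℤ) : ℤ) : ℂ) * 5 ^ k) / 2 ^ (s + 2)) from
      Fin.sum_univ_eq_sum_range (fun k => Complex.exp
        (2 * Real.pi * I * (((((i:ℕ):ℤ) - ((j:ℕ):ℤ) : ℤ) : ℂ) * 5 ^ k) / 2 ^ (s + 2))) (2 ^ s),
      hk, mul_zero]
    exact (Matrix.one_apply_ne hij).symm
end

section
/- Let m = 2^s, M = 2^{s+2}, ω a primitive M-th root of unity, and for 0 ≤ i ≤ m−1 let r_i = (1, ω^{5^i}, ω^{2·5^i}, ..., ω^{(m−1)·5^i}) ∈ ℂ^m. Then for all i, j, the Hermitian inner product satisfies r_i · r_j† = m·δ_{i,j}. -/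
/-!
The `k`-th term is `ζ ^ k` with `ζ = ω ^ 5 ^ i / ω ^ 5 ^ j`, so the sum is geometric.
Since `5 ^ i ≡ 1 [MOD 4]`, `ζ ^ (2 ^ s) = 1`, hence the sum vanishes unless `ζ = 1`;
and `ζ = 1` forces `i = j` because `5` has order `2 ^ s` modulo `2 ^ (s + 2)`.
-/

open Complex

open Finset in
theorem geom_sum_eq_ite_of_pow_eq_one {K : Type*} [DivisionRing K] [DecidableEq K] {x : K}
    {n : ℕ} (h : x ^ n = 1) : ∑ i ∈ range n, x ^ i = if x = 1 then (n : K) else 0 := by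
  split_ifs with hx
  · simp [hx]
  · rw [geom_sum_eq hx, h, sub_self, zero_div]

theorem Nat.five_pow_modEq_five_pow_iff {s i j : ℕ} (hi : i < 2 ^ s) (hj : j < 2 ^ s) :
    5 ^ i ≡ 5 ^ j [MOD 2 ^ (s + 2)] ↔ i = j := by
  rw [← ZMod.natCast_eq_natCast_iff]
  push_cast
  refine ⟨fun h ↦ pow_injOn_Iio_orderOf ?_ ?_ h, fun h ↦ h ▸ rfl⟩ <;>
    simpa [ZMod.orderOf_five]

theorem Nat.five_pow_mul_two_pow_modEq (s i : ℕ) : 5 ^ i * 2 ^ s ≡ 2 ^ s [MOD 2 ^ (s + 2)] := by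
  have h : 5 ^ i ≡ 1 [MOD 4] := by simpa using (show 5 ≡ 1 [MOD 4] by decide).pow i
  simpa [pow_add, mul_comm] using h.mul_right' (2 ^ s)

theorem IsPrimitiveRoot.pow_eq_pow_iff_modEq {M : Type*} [CommMonoid M] {ω : M} {n a b : ℕ}
    [NeZero n] (hω : IsPrimitiveRoot ω n) : ω ^ a = ω ^ b ↔ a ≡ b [MOD n] := by
  rw [hω.eq_orderOf]
  exact (hω.isOfFinOrder (NeZero.ne n)).pow_eq_pow_iff_modEq

theorem IsPrimitiveRoot.pow_mul_conj_pow_mul {ω : ℂ} {n : ℕ} [NeZero n]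
    (hω : IsPrimitiveRoot ω n) (a b k : ℕ) :
    ω ^ (k * a) * starRingEnd ℂ (ω ^ (k * b)) = (ω ^ a / ω ^ b) ^ k := by
  have hconj : starRingEnd ℂ ω = ω⁻¹ := (inv_eq_conj (hω.norm'_eq_one (NeZero.ne n))).symm
  rw [map_pow, hconj, div_pow, ← pow_mul, ← pow_mul, inv_pow, div_eq_mul_inv, mul_comm a,
    mul_comm b]

theorem cyclotomic_rows_orthogonal (s : ℕ)
    (ω : ℂ) (hω : IsPrimitiveRoot ω (2 ^ (s + 2)))
    (i j : ℕ) (hi : i < 2 ^ s) (hj : j < 2 ^ s) :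
    ∑ k ∈ Finset.range (2 ^ s),
      ω ^ (k * 5 ^ i) * (starRingEnd ℂ) (ω ^ (k * 5 ^ j)) =
      if i = j then (2 ^ s : ℂ) else 0 := by
  have hω0 : ω ≠ 0 := hω.ne_zero (by positivity)
  set ζ := ω ^ 5 ^ i / ω ^ 5 ^ j
  have hζ_pow : ζ ^ 2 ^ s = 1 := by
    rw [div_pow, ← pow_mul, ← pow_mul, div_eq_one_iff_eq (pow_ne_zero _ hω0),
      hω.pow_eq_pow_iff_modEq]
    exact (Nat.five_pow_mul_two_pow_modEq s i).trans (Nat.five_pow_mul_two_pow_modEq s j).symm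
  have hζ_eq_one : ζ = 1 ↔ i = j := by
    rw [div_eq_one_iff_eq (pow_ne_zero _ hω0), hω.pow_eq_pow_iff_modEq,
      Nat.five_pow_modEq_five_pow_iff hi hj]
  rw [Finset.sum_congr rfl fun k _ ↦ hω.pow_mul_conj_pow_mul (5 ^ i) (5 ^ j) k,
    geom_sum_eq_ite_of_pow_eq_one hζ_pow]
  simp only [hζ_eq_one]
  norm_cast
end

section
/- Let p be an odd prime, r a generator of (ℤ/pℤ)ˣ, m = (p−1)/2, ω = e^{2πi/p}, λ an integer with λ(r−1) ≡ 1 (mod p), and α = ∏_{k=0}^{m−1}(1 − ω^{r^k}). Let σ be the automorphism of ℚ(ω) with σ(ω) = ω^r. Then σ(α) = −ω^{p−1}α. -/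
open Complex Finset

theorem sigma_alpha_eq_neg_omega_pow_mul_alpha
    (p : ℕ) (hp : p.Prime) (hodd : Odd p)
    (r : ℕ) (hr : orderOf ((r : ZMod p)) = p - 1)
    (ω : ℂ) (hω : ω = Complex.exp (2 * Real.pi * Complex.I / p))
    (lam : ℤ) (hlam : lam * ((r : ℤ) - 1) ≡ 1 [ZMOD (p : ℤ)])
    (α : ℂ) (hα : α = ∏ k ∈ Finset.range ((p - 1) / 2), (1 - ω ^ (r ^ k)))
    (σ : ℂ →+* ℂ) (hσ : σ ω = ω ^ r) :
    σ α = -ω ^ (p - 1) * α := by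
  have hp1 : 1 ≤ p := hp.one_lt.le
  have hprim : IsPrimitiveRoot ω p := by
    rw [hω]; exact Complex.isPrimitiveRoot_exp p hp.ne_zero
  have hωp : ω ^ p = 1 := hprim.pow_eq_one
  have hord : orderOf ω = p := hprim.eq_orderOf.symm
  set m := (p - 1) / 2 with hm
  have hp3 : 3 ≤ p := by
    rcases hp.two_le.lt_or_eq with h | h
    · omega
    · exfalso; rw [← h] at hodd; exact (Nat.not_odd_iff_even.mpr (by decide)) hodd
  have heven : 2 ∣ p - 1 := (Nat.Odd.sub_odd hodd odd_one).two_dvd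
  have h2m : 2 * m = p - 1 := Nat.mul_div_cancel' heven
  have hm_pos : 0 < m := by omega
  have hmlt : m < p - 1 := by omega
  -- r^m = -1 in ZMod p
  set x : ZMod p := (r : ZMod p) ^ m with hx
  have hr1 : (r : ZMod p) ^ (p - 1) = 1 := by
    rw [← hr]; exact pow_orderOf_eq_one _
  have hx2 : x ^ 2 = 1 := by
    rw [hx, ← pow_mul, mul_comm, h2m, hr1]
  have hx_ne : x ≠ 1 := by
    intro h
    have hd : orderOf ((r : ZMod p)) ∣ m := orderOf_dvd_of_pow_eq_one h
    rw [hr] at hd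
    exact absurd (Nat.le_of_dvd hm_pos hd) (not_le.mpr hmlt)
  have hxneg : x = -1 := by
    haveI := Fact.mk hp
    have hmul : (x - 1) * (x + 1) = 0 := by linear_combination hx2
    rcases mul_eq_zero.mp hmul with h | h
    · exact absurd (sub_eq_zero.mp h) hx_ne
    · exact eq_neg_of_add_eq_zero_left h
  have hmod : r ^ m ≡ p - 1 [MOD p] := by
    rw [← ZMod.natCast_eq_natCast_iff]
    rw [Nat.cast_pow, ← hx, hxneg, Nat.cast_sub hp1, ZMod.natCast_self]
    ring
  have hpow : ∀ a b : ℕ, a ≡ b [MOD p] → ω ^ a = ω ^ b := by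
    intro a b hab
    rw [← Nat.div_add_mod a p, ← Nat.div_add_mod b p, pow_add, pow_add,
      pow_mul, pow_mul, hωp, one_pow, one_pow, (hab : a % p = b % p)]
  have hωrm : ω ^ (r ^ m) = ω ^ (p - 1) := hpow _ _ hmod
  have hσα : σ α = ∏ k ∈ Finset.range m, (1 - ω ^ (r ^ (k + 1))) := by
    rw [hα, map_prod]
    refine Finset.prod_congr rfl fun k _ => ?_
    rw [map_sub, map_one, map_pow, hσ, ← pow_mul, ← pow_succ']
  have key : σ α * (1 - ω ^ (r ^ 0)) = α * (1 - ω ^ (r ^ m)) := by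
    have h1 := Finset.prod_range_succ' (fun k => (1 - ω ^ (r ^ k))) m
    have h2 := Finset.prod_range_succ (fun k => (1 - ω ^ (r ^ k))) m
    rw [hσα, hα, ← h1, h2]
  have hne : (1 : ℂ) - ω ≠ 0 := sub_ne_zero.mpr (hprim.ne_one hp.one_lt).symm
  have hfac : 1 - ω ^ (p - 1) = -ω ^ (p - 1) * (1 - ω) := by
    have h : ω ^ (p - 1) * ω = 1 := by
      rw [← pow_succ, Nat.sub_add_cancel hp1, hωp]
    linear_combination -h
  rw [pow_zero, pow_one, hωrm, hfac] at key
  apply mul_right_cancel₀ hne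
  linear_combination key
end

section
/- Let p be an odd prime, r a generator of (ℤ/pℤ)ˣ, m = (p−1)/2, ω = e^{2πi/p}, λ an integer with λ(r−1) ≡ 1 (mod p), and α = ∏_{k=0}^{m−1}(1 − ω^{r^k}). Then (ω^λ α)² = (−1)^m p. -/
/-!
The numbers `ω ^ r ^ k`, `0 ≤ k < p - 1`, are exactly the primitive `p`-th roots of unity, so the
product of the `1 - ω ^ r ^ k` is `Φ_p(1) = p`. As `r ^ m ≡ -1 (mod p)` for `p = 2m + 1`, the second
half of this product is the first half `α` with each `ω ^ r ^ k` inverted, whence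
`p = (-1) ^ m * ω ^ (-S) * α ^ 2` with `S = ∑_{k<m} r ^ k`. Finally `S (r - 1) = r ^ m - 1 ≡ -2`, so
`S ≡ -2λ` and `ω ^ (2λ)` cancels `ω ^ (-S)`.
-/

open Finset Polynomial

theorem two_mul_add_geom_sum_eq_zero {R : Type*} [CommRing R] {x l : R} {m : ℕ}
    (hl : l * (x - 1) = 1) (hx : x ^ m = -1) : 2 * l + ∑ k ∈ range m, x ^ k = 0 := by
  linear_combination -(∑ k ∈ range m, x ^ k) * hl + l * geom_sum_mul x m + l * hx

theorem IsPrimitiveRoot.pow_eq_neg_one {R : Type*} [CommRing R] [NoZeroDivisors R] {x : R}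
    {m : ℕ} (hx : IsPrimitiveRoot x (2 * m)) (hm : m ≠ 0) : x ^ m = -1 :=
  (hx.pow (by omega) (mul_comm _ _)).eq_neg_one_of_two_right

namespace IsPrimitiveRoot

theorem pow_mul_pow_eq_one {M : Type*} [CommMonoid M] {n : ℕ} {ζ : M} (hζ : IsPrimitiveRoot ζ n)
    {a b : ℕ} (h : ((a + b : ℕ) : ZMod n) = 0) : ζ ^ a * ζ ^ b = 1 := by
  rw [← pow_add, hζ.pow_eq_one_iff_dvd, ← ZMod.natCast_eq_zero_iff, h]

variable {K : Type*} {p r : ℕ} [Fact p.Prime] {ω : K}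

section Monoid

variable [CommMonoid K]

theorem injOn_pow_pow (hω : IsPrimitiveRoot ω p) (hr : IsPrimitiveRoot (r : ZMod p) (p - 1)) :
    Set.InjOn (fun k ↦ ω ^ r ^ k) (range (p - 1)) := by
  intro i hi j hj hij
  have hmod : r ^ i ≡ r ^ j [MOD p] := by
    have := (hω.isOfFinOrder (Fact.out : p.Prime).ne_zero).pow_inj_mod.1 hij
    rwa [← hω.eq_orderOf] at this
  refine hr.pow_inj (by simpa using hi) (by simpa using hj) ?_
  exact_mod_cast (ZMod.natCast_eq_natCast_iff _ _ _).2 hmod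

end Monoid

section Domain

variable [CommRing K] [IsDomain K]

theorem prod_primitiveRoots_one_sub (hω : IsPrimitiveRoot ω p) :
    ∏ μ ∈ primitiveRoots p K, (1 - μ) = p := by
  simpa [eval_prod] using congrArg (eval 1) (cyclotomic_eq_prod_X_sub_primitiveRoots hω).symm

theorem pow_pow_mem_primitiveRoots (hω : IsPrimitiveRoot ω p)
    (hr : IsPrimitiveRoot (r : ZMod p) (p - 1)) (k : ℕ) : ω ^ r ^ k ∈ primitiveRoots p K := by
  have hp := (Fact.out : p.Prime)
  have hcop : r.Coprime p :=
    (ZMod.isUnit_iff_coprime r p).1 (hr.isUnit (Nat.sub_ne_zero_of_lt hp.one_lt))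
  exact (mem_primitiveRoots hp.pos).2 (hω.pow_of_coprime _ (hcop.pow_left k))

theorem image_pow_pow_range [DecidableEq K] (hω : IsPrimitiveRoot ω p)
    (hr : IsPrimitiveRoot (r : ZMod p) (p - 1)) :
    (range (p - 1)).image (fun k ↦ ω ^ r ^ k) = primitiveRoots p K := by
  refine eq_of_subset_of_card_le ?_ ?_
  · simpa [image_subset_iff] using fun k _ ↦ hω.pow_pow_mem_primitiveRoots hr k
  · rw [card_image_of_injOn (hω.injOn_pow_pow hr), card_range, hω.card_primitiveRoots,
      Nat.totient_prime Fact.out]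

theorem prod_range_one_sub_pow_pow (hω : IsPrimitiveRoot ω p)
    (hr : IsPrimitiveRoot (r : ZMod p) (p - 1)) :
    ∏ k ∈ range (p - 1), (1 - ω ^ r ^ k) = p := by
  classical
  rw [← hω.prod_primitiveRoots_one_sub, ← hω.image_pow_pow_range hr,
    prod_image (hω.injOn_pow_pow hr)]

end Domain

section Field

variable [Field K] {m : ℕ}

theorem prod_range_one_sub_pow_pow_add (hω : IsPrimitiveRoot ω p)
    (hr : (r : ZMod p) ^ m = -1) (n : ℕ) :
    ∏ k ∈ range n, (1 - ω ^ r ^ (m + k)) =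
      (-1) ^ n * (ω ^ ∑ k ∈ range n, r ^ k)⁻¹ * ∏ k ∈ range n, (1 - ω ^ r ^ k) := by
  have hinv (k : ℕ) : ω ^ r ^ (m + k) = (ω ^ r ^ k)⁻¹ :=
    eq_inv_of_mul_eq_one_left (hω.pow_mul_pow_eq_one (by push_cast; rw [pow_add, hr]; ring))
  have hne (k : ℕ) : ω ^ r ^ k ≠ 0 := pow_ne_zero _ (hω.ne_zero (Fact.out : p.Prime).ne_zero)
  have hterm (k : ℕ) : 1 - ω ^ r ^ (m + k) = -(ω ^ r ^ k)⁻¹ * (1 - ω ^ r ^ k) := by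
    rw [hinv]
    linear_combination -inv_mul_cancel₀ (hne k)
  simp only [hterm, prod_mul_distrib, prod_neg, prod_inv_distrib, prod_pow_eq_pow_sum, card_range]

theorem pow_half_eq_neg_one {x : ZMod p} (hx : IsPrimitiveRoot x (p - 1)) (hm : p = 2 * m + 1) :
    x ^ m = -1 := by
  have hp := (Fact.out : p.Prime).two_le
  exact (show p - 1 = 2 * m by omega) ▸ hx |>.pow_eq_neg_one (by omega)

theorem sq_prod_range_one_sub_pow_pow (hω : IsPrimitiveRoot ω p)
    (hr : IsPrimitiveRoot (r : ZMod p) (p - 1)) (hm : p = 2 * m + 1) :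
    (∏ k ∈ range m, (1 - ω ^ r ^ k)) ^ 2 = (-1) ^ m * ω ^ (∑ k ∈ range m, r ^ k) * p := by
  have hrm := pow_half_eq_neg_one hr hm
  have hsplit := hω.prod_range_one_sub_pow_pow hr
  rw [show p - 1 = m + m by omega, prod_range_add, hω.prod_range_one_sub_pow_pow_add hrm] at hsplit
  have hne : ω ^ ∑ k ∈ range m, r ^ k ≠ 0 := pow_ne_zero _ (hω.ne_zero (by omega))
  rw [← hsplit]
  field_simp
  rw [← pow_mul, mul_comm m, pow_mul, neg_one_sq, one_pow, mul_one]

theorem sq_zpow_mul_prod_range_one_sub_pow_pow (hω : IsPrimitiveRoot ω p)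
    (hr : IsPrimitiveRoot (r : ZMod p) (p - 1)) (hm : p = 2 * m + 1) {lam : ℤ}
    (hlam : (lam : ZMod p) * (r - 1) = 1) :
    (ω ^ lam * ∏ k ∈ range m, (1 - ω ^ r ^ k)) ^ 2 = (-1) ^ m * p := by
  have hexp : ω ^ (2 * lam) * ω ^ (∑ k ∈ range m, r ^ k) = 1 := by
    rw [← zpow_natCast, ← zpow_add₀ (hω.ne_zero (Fact.out : p.Prime).ne_zero),
      hω.zpow_eq_one_iff_dvd, ← ZMod.intCast_zmod_eq_zero_iff_dvd]
    push_cast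
    exact two_mul_add_geom_sum_eq_zero hlam (pow_half_eq_neg_one hr hm)
  calc (ω ^ lam * ∏ k ∈ range m, (1 - ω ^ r ^ k)) ^ 2
      = ω ^ (2 * lam) * (∏ k ∈ range m, (1 - ω ^ r ^ k)) ^ 2 := by
        rw [mul_pow, ← zpow_natCast, ← zpow_mul, Nat.cast_ofNat, mul_comm lam]
    _ = (-1) ^ m * (p : K) := by
        rw [hω.sq_prod_range_one_sub_pow_pow hr hm]
        linear_combination ((-1) ^ m * p : K) * hexp

end Field

end IsPrimitiveRoot

theorem omega_lambda_alpha_sq_eq_neg_one_pow_mul_p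
    (p : ℕ) (hp : p.Prime) (hodd : Odd p)
    (r : ℕ) (hr : orderOf ((r : ZMod p)) = p - 1)
    (ω : ℂ) (hω : ω = Complex.exp (2 * Real.pi * Complex.I / p))
    (lam : ℤ) (hlam : lam * ((r : ℤ) - 1) ≡ 1 [ZMOD (p : ℤ)])
    (α : ℂ) (hα : α = ∏ k ∈ Finset.range ((p - 1) / 2), (1 - ω ^ (r ^ k))) :
    (ω ^ lam * α) ^ 2 = (-1) ^ ((p - 1) / 2) * (p : ℂ) := by
  have : Fact p.Prime := ⟨hp⟩
  have hprim : IsPrimitiveRoot ω p := hω ▸ Complex.isPrimitiveRoot_exp p hp.ne_zero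
  have hgen : IsPrimitiveRoot (r : ZMod p) (p - 1) := hr ▸ IsPrimitiveRoot.orderOf _
  have hm : p = 2 * ((p - 1) / 2) + 1 := by
    obtain ⟨t, rfl⟩ := hodd
    omega
  have hlam' : (lam : ZMod p) * (r - 1) = 1 := by
    simpa using (ZMod.intCast_eq_intCast_iff _ _ p).2 hlam
  rw [hα]
  exact hprim.sq_zpow_mul_prod_range_one_sub_pow_pow hgen hm hlam'
end

section
/- Let n ≥ 3 be odd and p ≡ 1 (mod n) a prime. Then the n×n real matrix G = (1/p)[σ^{i+j}(x)]_{0≤i,j≤n−1} (a circulant matrix with first row (x, σ(x), ..., σ^{n−1}(x))/p) is orthogonal: G·Gᵀ = I_n. -/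
open Complex Finset

private lemma negpow_congr (a b : ℕ) (h : a % 2 = b % 2) : (-1:ℂ)^a = (-1:ℂ)^b := by
  conv_lhs => rw [← Nat.div_add_mod a 2]
  conv_rhs => rw [← Nat.div_add_mod b 2]
  rw [pow_add, pow_add, pow_mul, pow_mul, neg_one_sq, one_pow, one_pow, h]

private lemma sum_shift (F : ℕ → ℂ) (N : ℕ) (hF : ∀ u, F (u + N) = F u) (s : ℕ) :
    ∑ u ∈ range N, F (u + s) = ∑ u ∈ range N, F u := by
  induction s with
  | zero => simp
  | succ s ih =>
    have e1 : ∑ u ∈ range (N+1), F (u + s) = ∑ u ∈ range N, F ((u+1) + s) + F s :=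
      by simpa using Finset.sum_range_succ' (fun u => F (u + s)) N
    have e2 : ∑ u ∈ range (N+1), F (u + s) = ∑ u ∈ range N, F (u + s) + F (N + s) :=
      Finset.sum_range_succ _ N
    have e3 : F (N + s) = F s := by rw [Nat.add_comm N s, hF]
    have e4 : ∑ u ∈ range N, F (u + (s+1)) = ∑ u ∈ range N, F ((u+1) + s) := by
      apply Finset.sum_congr rfl; intro u _; congr 1; omega
    rw [e4]
    have h5 : ∑ u ∈ range N, F ((u+1) + s) = ∑ u ∈ range N, F (u + s) := by
      have := e1.symm.trans e2
      rw [e3] at this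
      exact add_right_cancel this
    rw [h5, ih]

private lemma sum_period (F : ℕ → ℂ) (N : ℕ) (hF : ∀ u, F (u + N) = F u) (m : ℕ) :
    ∑ u ∈ range (N * m), F u = m * ∑ u ∈ range N, F u := by
  have hFk : ∀ u k, F (u + N * k) = F u := by
    intro u k
    induction k with
    | zero => simp
    | succ k ih => rw [Nat.mul_succ, ← Nat.add_assoc, hF, ih]
  induction m with
  | zero => simp
  | succ m ih =>
    rw [Nat.mul_succ, Finset.sum_range_add, ih]
    have : ∀ x, F (N * m + x) = F x := by intro x; rw [Nat.add_comm, hFk]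
    simp only [this]
    push_cast; ring

private lemma alt_sum (k : ℕ) : ∑ a ∈ Icc 1 (2 * k), (-1 : ℂ)^a = 0 := by
  induction k with
  | zero => simp
  | succ k ih =>
    have h1 : (2 * (k+1)) = (2*k+1) + 1 := by ring
    rw [h1, Finset.sum_Icc_succ_top (by omega), Finset.sum_Icc_succ_top (by omega), ih]
    rw [pow_succ]
    ring

private lemma aux_arith (n m m2 t e : ℕ) (hn : 3 ≤ n) (hm2 : 1 ≤ m2) (hme : m = 2 * m2)
    (ht : t < n) (he1 : 1 ≤ e) (he2 : e ≤ 2*m - 1) :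
    (t + e*n ≡ n*m2 [MOD n*m]) ↔ (t = 0 ∧ (e = m2 ∨ e = m2 + m)) := by
  subst hme
  constructor
  · intro h
    have hd : ((n:ℤ)*(2*m2)) ∣ ((n*m2 : ℕ) : ℤ) - ((t + e*n : ℕ) : ℤ) := by
      exact_mod_cast h.dvd
    obtain ⟨k, hk⟩ := hd
    push_cast at hk
    have hn0 : (0:ℤ) < n := by positivity
    have hm0 : (0:ℤ) < m2 := by exact_mod_cast hm2
    have ht' : (t:ℤ) < n := by exact_mod_cast ht
    have ht2 : (0:ℤ) ≤ t := by positivity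
    have he0 : (1:ℤ) ≤ e := by exact_mod_cast he1
    have he2' : (e:ℤ) ≤ 2*(2*m2) - 1 := by
      have : (e:ℤ) ≤ ((2*(2*m2) - 1 : ℕ):ℤ) := by exact_mod_cast he2
      omega
    have hen : (e:ℤ)*n ≤ (2*(2*(m2:ℤ)) - 1)*n :=
      mul_le_mul_of_nonneg_right he2' hn0.le
    have hen0 : (0:ℤ) ≤ (e:ℤ)*n := by positivity
    have hk0 : k = 0 ∨ k = -1 := by
      rcases lt_trichotomy k 0 with h'|h'|h'
      · by_contra hne
        have h2 : k ≤ -2 := by omega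
        have hstep : (n:ℤ)*(2*m2)*k ≤ (n:ℤ)*(2*m2)*(-2) :=
          mul_le_mul_of_nonneg_left h2 (by positivity)
        nlinarith
      · left; exact h'
      · exfalso
        have h2 : 1 ≤ k := h'
        have hstep : (n:ℤ)*(2*m2)*1 ≤ (n:ℤ)*(2*m2)*k :=
          mul_le_mul_of_nonneg_left h2 (by positivity)
        nlinarith
    have ht0 : ∀ c : ℤ, 0 ≤ c → (t:ℤ) + e*n = (n:ℤ)*c → t = 0 ∧ (e:ℤ) = c := by
      intro c hc0 hc
      have h1 : (t:ℤ) = (n:ℤ)*(c - e) := by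
        have : (n:ℤ)*(c-e) = n*c - e*n := by ring
        rw [this]; linarith
      have hce : c - (e:ℤ) = 0 := by
        rcases lt_trichotomy (c - (e:ℤ)) 0 with h'|h'|h'
        · exfalso
          have h2 : c - (e:ℤ) ≤ -1 := by omega
          have hstep : (n:ℤ)*(c-e) ≤ (n:ℤ)*(-1) :=
            mul_le_mul_of_nonneg_left h2 hn0.le
          nlinarith
        · exact h'
        · exfalso
          have h2 : 1 ≤ c - (e:ℤ) := by omega
          have hstep : (n:ℤ)*1 ≤ (n:ℤ)*(c-e) :=
            mul_le_mul_of_nonneg_left h2 hn0.le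
          nlinarith
      constructor
      · have : (t:ℤ) = 0 := by rw [h1, hce]; ring
        exact_mod_cast this
      · omega
    rcases hk0 with rfl|rfl
    · have hc : (t:ℤ) + e*n = (n:ℤ)*m2 := by linear_combination -hk
      obtain ⟨h1, h2⟩ := ht0 m2 (by positivity) hc
      exact ⟨h1, Or.inl (by exact_mod_cast h2)⟩
    · have hc : (t:ℤ) + e*n = (n:ℤ)*(m2 + 2*m2) := by linear_combination -hk
      obtain ⟨h1, h2⟩ := ht0 ((m2:ℤ) + 2*m2) (by positivity) hc
      refine ⟨h1, Or.inr ?_⟩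
      have : (e:ℤ) = ((m2 + 2*m2 : ℕ):ℤ) := by push_cast; linarith
      exact_mod_cast this
  · rintro ⟨rfl, he|he⟩
    · subst he; simp [Nat.ModEq, Nat.mul_comm]
    · subst he
      show 0 + (m2 + 2*m2)*n ≡ n*m2 [MOD n*(2*m2)]
      have h1 : 0 + (m2 + 2*m2)*n = n*m2 + n*(2*m2) := by ring
      unfold Nat.ModEq
      rw [h1, Nat.add_mod_right]

theorem circulant_matrix_orthogonal
    (n : ℕ) (hn3 : 3 ≤ n) (hnodd : Odd n)
    (p : ℕ) (hp : p.Prime) (hp1 : p ≡ 1 [MOD n])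
    (r : ℕ) (hr : orderOf ((r : ZMod p)) = p - 1)
    (ω : ℂ) (hω : ω = Complex.exp (2 * Real.pi * Complex.I / p))
    (lam : ℤ) (hlam : lam * ((r : ℤ) - 1) ≡ 1 [ZMOD (p : ℤ)])
    (α : ℂ) (hα : α = ∏ k ∈ Finset.range ((p - 1) / 2), (1 - ω ^ (r ^ k)))
    (σ : ℂ ≃+* ℂ) (hσ : σ ω = ω ^ r)
    (z : ℂ) (hz : z = ω ^ lam * α * (1 - ω))
    (x : ℂ) (hx : x = ∑ j ∈ Finset.Icc 1 ((p - 1) / n), (σ ^ (j * n)) z)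
    (G : Matrix (Fin n) (Fin n) ℂ)
    (hG : ∀ i j : Fin n, G i j = (1 / (p : ℂ)) * (σ ^ ((i : ℕ) + (j : ℕ))) x) :
    G * G.transpose = 1 := by
  haveI : Fact p.Prime := ⟨hp⟩
  have hn1 : 1 < n := by omega
  have hnp : n ∣ p - 1 := (Nat.modEq_iff_dvd' hp.one_le).mp hp1.symm
  have hp3 : 3 ≤ p := by
    rcases Nat.lt_or_ge p 3 with h|h
    · interval_cases p
      · exact absurd hp (by norm_num)
      · exact absurd hp (by norm_num)
      · have := Nat.le_of_dvd one_pos hnp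
        omega
    · exact h
  have hpodd : p % 2 = 1 := Nat.odd_iff.mp (hp.odd_of_ne_two (by omega))
  set m := (p - 1) / n with hmdef
  have hm : p - 1 = n * m := (Nat.div_mul_cancel hnp).symm.trans (Nat.mul_comm _ _)
  have hm1 : 1 ≤ m := by
    rcases Nat.eq_zero_or_pos m with h|h
    · rw [h, Nat.mul_zero] at hm; omega
    · exact h
  have hmeven : m % 2 = 0 := by
    have h2 : (p - 1) % 2 = 0 := by omega
    rcases Nat.even_mul.mp (Nat.even_iff.mpr (hm ▸ h2)) with h|h
    · exact absurd h (Nat.not_even_iff_odd.mpr hnodd)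
    · exact Nat.even_iff.mp h
  have hm2 : 2 ≤ m := by omega
  set m2 := m / 2 with hm2def
  have hmm2 : m = 2 * m2 := by omega
  have hm21 : 1 ≤ m2 := by omega
  set h := (p - 1) / 2 with hhdef
  have hh : h = n * m2 := by
    have : p - 1 = (n * m2) * 2 := by rw [hm, hmm2]; ring
    rw [hhdef, this, Nat.mul_div_cancel _ two_pos]
  have hhh : p - 1 = h + h := by omega
  -- ρ and units
  set ρ : ZMod p := (r : ZMod p) with hρdef
  have hρ0 : ρ ≠ 0 := by
    intro h0
    have h1 := pow_orderOf_eq_one ρ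
    rw [hr, h0, zero_pow (by omega : p - 1 ≠ 0)] at h1
    exact one_ne_zero h1.symm
  have hcop : Nat.Coprime r p := by
    rw [Nat.coprime_comm]
    refine hp.coprime_iff_not_dvd.mpr (fun hd => hρ0 ?_)
    rwa [hρdef, ZMod.natCast_eq_zero_iff]
  set ρu : (ZMod p)ˣ := ZMod.unitOfCoprime r hcop with hρudef
  have hρu : (ρu : ZMod p) = ρ := ZMod.coe_unitOfCoprime r hcop
  have horder : orderOf ρu = p - 1 := by rw [← orderOf_units, hρu, hr]
  have hρpow : ∀ u : ℕ, ((ρu ^ u : (ZMod p)ˣ) : ZMod p) = ρ ^ u := by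
    intro u; rw [Units.val_pow_eq_pow_val, hρu]
  -- ρ^h = -1
  have hρh : ρ ^ h = -1 := by
    have h2 : (ρ ^ h) * (ρ ^ h) = 1 := by
      rw [← pow_add, ← hhh, ← hr, pow_orderOf_eq_one]
    rcases mul_self_eq_one_iff.mp h2 with h1|h1
    · exfalso
      have hu : ρu ^ h = 1 := by
        apply Units.ext
        rw [hρpow, h1, Units.val_one]
      have := orderOf_dvd_of_pow_eq_one hu
      rw [horder] at this
      have := Nat.le_of_dvd (by omega : 0 < h) this
      omega
    · exact h1
  -- ω facts
  have hprim : IsPrimitiveRoot ω p := hω ▸ Complex.isPrimitiveRoot_exp p (by omega)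
  have hωp : ω ^ p = 1 := hprim.pow_eq_one
  have hω0 : ω ≠ 0 := hprim.ne_zero (by omega)
  have hω1 : ω ≠ 1 := hprim.ne_one (by omega)
  have hωsub : 1 - ω ≠ 0 := fun hc => hω1 (by linear_combination -hc)
  have hmodp : ∀ a : ℕ, ω ^ a = ω ^ (a % p) := by
    intro a
    conv_lhs => rw [← Nat.div_add_mod a p]
    rw [pow_add, pow_mul, hωp, one_pow, one_mul]
  have hbr : ∀ a b : ℕ, ((a : ZMod p) = (b : ZMod p)) → ω ^ a = ω ^ b := by
    intro a b hab
    rw [hmodp a, hmodp b]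
    congr 1
    exact (ZMod.natCast_eq_natCast_iff a b p).mp hab
  have hbrz : ∀ a b : ℤ, ((a : ZMod p) = (b : ZMod p)) → ω ^ a = ω ^ b := by
    intro a b hab
    obtain ⟨k, hk⟩ : (p:ℤ) ∣ b - a := Int.ModEq.dvd ((ZMod.intCast_eq_intCast_iff a b p).mp hab)
    have hb : b = a + p * k := by linarith
    rw [hb, zpow_add₀ hω0, zpow_mul, zpow_natCast, hωp, one_zpow, mul_one]
  -- lam fact in ZMod p
  have hlamz : ((lam : ZMod p)) * ((r : ZMod p) - 1) = 1 := by
    have h1 : ((lam * ((r:ℤ) - 1) : ℤ) : ZMod p) = ((1 : ℤ) : ZMod p) :=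
      (ZMod.intCast_eq_intCast_iff _ _ _).mpr hlam
    push_cast at h1
    exact h1
  -- sigma on powers of ω
  have hσpow : ∀ a : ℕ, σ (ω ^ a) = ω ^ (r * a) := by
    intro a; rw [map_pow, hσ, ← pow_mul]
  have hmulapply : ∀ (a b : ℕ) (w : ℂ), (σ ^ (a + b)) w = (σ ^ a) ((σ ^ b) w) := by
    intro a b w; rw [pow_add]; rfl
  -- σ α = -(ω^(p-1)) α
  have hσα : σ α = -(ω ^ (p-1)) * α := by
    have e1 : (1 - ω) * σ α = α * (1 - ω ^ (r ^ h)) := by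
      rw [hα, map_prod]
      have e2 : ∀ k, σ (1 - ω ^ (r ^ k)) = 1 - ω ^ (r ^ (k+1)) := by
        intro k
        rw [map_sub, map_one, hσpow, ← pow_succ']
      simp only [e2]
      have e3 : (1 - ω) = 1 - ω ^ (r ^ 0) := by norm_num
      rw [e3]
      calc (1 - ω ^ r ^ 0) * ∏ x ∈ range h, (1 - ω ^ r ^ (x+1))
          = (∏ x ∈ range h, (1 - ω ^ r ^ (x+1))) * (1 - ω ^ r ^ 0) := mul_comm _ _
        _ = ∏ x ∈ range (h+1), (1 - ω ^ r ^ x) := (Finset.prod_range_succ' (fun x => 1 - ω ^ r ^ x) h).symm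
        _ = (∏ k ∈ range h, (1 - ω ^ r ^ k)) * (1 - ω ^ r ^ h) := Finset.prod_range_succ (fun x => 1 - ω ^ r ^ x) h
    have hc2 : ((p - 1 : ℕ) : ZMod p) = -1 := by
      have hc3 : ((p - 1 : ℕ) : ZMod p) + 1 = ((p : ℕ) : ZMod p) := by
        rw [← Nat.cast_add_one]; congr 1; omega
      rw [ZMod.natCast_self] at hc3
      linear_combination hc3
    have e4 : ω ^ (r ^ h) = ω ^ (p - 1) := by
      apply hbr
      have hc1 : ((r ^ h : ℕ) : ZMod p) = ρ ^ h := by push_cast; rfl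
      rw [hc1, hc2, hρh]
    have e5 : 1 - ω ^ (p - 1) = -(ω ^ (p-1)) * (1 - ω) := by
      have e6 : ω ^ (p-1) * ω = 1 := by
        rw [← pow_succ]
        have e7 : p - 1 + 1 = p := by omega
        rw [e7, hωp]
      linear_combination -e6
    rw [e4, e5] at e1
    apply mul_left_cancel₀ hωsub
    rw [e1]; ring
  have hc2 : ((p - 1 : ℕ) : ZMod p) = -1 := by
    have hc3 : ((p - 1 : ℕ) : ZMod p) + 1 = ((p : ℕ) : ZMod p) := by
      rw [← Nat.cast_add_one]; congr 1; omega
    rw [ZMod.natCast_self] at hc3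
    linear_combination hc3
  -- σ (ω^lam * α) = -(ω^lam * α)
  have hσC : σ (ω ^ lam * α) = -(ω ^ lam * α) := by
    have b1 : σ (ω ^ lam) = ω ^ ((r:ℤ) * lam) := by
      rw [map_zpow₀, hσ, ← zpow_natCast ω r, ← zpow_mul]
    rw [map_mul, hσα, b1]
    have e2 : ω ^ ((r:ℤ) * lam + ((p - 1 : ℕ) : ℤ)) = ω ^ lam := by
      apply hbrz
      push_cast
      push_cast at hc2
      rw [hc2]
      linear_combination hlamz
    calc ω ^ ((r:ℤ)*lam) * (-ω ^ (p-1) * α)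
        = -(ω ^ ((r:ℤ)*lam) * ω ^ (((p-1:ℕ)):ℤ) * α) := by rw [zpow_natCast]; ring
      _ = -(ω ^ ((r:ℤ)*lam + ((p-1:ℕ):ℤ)) * α) := by rw [zpow_add₀ hω0]
      _ = -(ω ^ lam * α) := by rw [e2]
  -- the key formula for σ^u z
  have hg : ∀ u : ℕ, (σ ^ u) z = (-1)^u * (ω ^ lam * α) * (1 - ω ^ (r ^ u)) := by
    intro u
    induction u with
    | zero => simpa using hz
    | succ u ih =>
      have e0 : (σ ^ (u+1)) z = σ ((σ ^ u) z) := by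
        rw [Nat.add_comm, hmulapply 1 u, pow_one]
      have e1 : σ ((-1:ℂ) ^ u) = (-1:ℂ)^u := by
        rw [map_pow, map_neg, map_one]
      rw [e0, ih, map_mul, map_mul, e1, hσC, map_sub, map_one, hσpow, pow_succ'
        (a := r) (n := u)]
      ring
  -- C and g
  set C : ℂ := ω ^ lam * α with hCdef
  set g : ℕ → ℂ := fun u => (σ ^ u) z with hgdef
  have hgu : ∀ u : ℕ, g u = (-1)^u * C * (1 - ω ^ (r ^ u)) := hg
  have hρp1 : ρ ^ (p - 1) = 1 := by rw [← hr, pow_orderOf_eq_one]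
  have hgper : ∀ u, g (u + (p-1)) = g u := by
    intro u
    rw [hgu, hgu]
    have e1 : (-1:ℂ)^(u + (p-1)) = (-1:ℂ)^u := negpow_congr _ _ (by omega)
    have e2 : ω ^ (r ^ (u + (p-1))) = ω ^ (r ^ u) := by
      apply hbr
      push_cast
      rw [← hρdef, pow_add, hρp1, mul_one]
    rw [e1, e2]
  -- reindexing powers of ρ over nonzero elements
  have hinj : ∀ a ∈ range (p-1), ∀ b ∈ range (p-1), ρ ^ a = ρ ^ b → a = b := by
    intro a ha b hb hab
    exact pow_injOn_Iio_orderOf (x := ρ)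
      (by rw [Set.mem_Iio, hr]; exact Finset.mem_range.mp ha)
      (by rw [Set.mem_Iio, hr]; exact Finset.mem_range.mp hb) hab
  have hunit : ∀ u : ℕ, ρ ^ u ≠ 0 := by
    intro u hc
    rw [← hρpow] at hc
    exact Units.ne_zero _ hc
  have himg : (range (p-1)).image (fun u => ρ ^ u) = Finset.univ.erase (0 : ZMod p) := by
    apply Finset.eq_of_subset_of_card_le
    · intro a ha
      simp only [Finset.mem_image, Finset.mem_range] at ha
      obtain ⟨u, hu, rfl⟩ := ha
      exact Finset.mem_erase.mpr ⟨hunit u, Finset.mem_univ _⟩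
    · rw [Finset.card_erase_of_mem (Finset.mem_univ _), Finset.card_univ, ZMod.card,
        Finset.card_image_of_injOn (fun a ha b hb hab => hinj a ha b hb hab),
        Finset.card_range]
  have hB1 : ∀ F : ZMod p → ℂ, ∑ u ∈ range (p-1), F (ρ ^ u)
      = ∑ a ∈ Finset.univ.erase (0 : ZMod p), F a := by
    intro F
    rw [← himg, Finset.sum_image hinj]
  have hB2 : ∀ (c : ZMod p), c ≠ 0 → ∀ F : ZMod p → ℂ,
      ∑ a ∈ Finset.univ.erase (0:ZMod p), F (a * c)
        = ∑ a ∈ Finset.univ.erase (0:ZMod p), F a := by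
    intro c hc F
    apply Finset.sum_nbij' (i := fun a => a * c) (j := fun a => a * c⁻¹)
    · intro a ha
      exact Finset.mem_erase.mpr ⟨mul_ne_zero (Finset.mem_erase.mp ha).1 hc, Finset.mem_univ _⟩
    · intro a ha
      exact Finset.mem_erase.mpr
        ⟨mul_ne_zero (Finset.mem_erase.mp ha).1 (inv_ne_zero hc), Finset.mem_univ _⟩
    · intro a ha
      field_simp
    · intro a ha
      field_simp
    · intro a ha
      rfl
  -- basic sums
  have hvalcast : ∀ a : ZMod p, ((ZMod.val a : ℕ) : ZMod p) = a := fun a => ZMod.natCast_rightInverse a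
  have hA : ∑ a : ZMod p, ω ^ (ZMod.val a) = 0 := by
    rw [← hprim.geom_sum_eq_zero (by omega : 1 < p)]
    apply Finset.sum_nbij' (i := fun a : ZMod p => ZMod.val a) (j := fun k : ℕ => (k : ZMod p))
    · intro a _
      exact Finset.mem_range.mpr (ZMod.val_lt a)
    · intro k _
      exact Finset.mem_univ _
    · intro a _
      exact hvalcast a
    · intro k hk
      exact ZMod.val_cast_of_lt (Finset.mem_range.mp hk)
    · intro a _
      rfl
  have hE : ∑ a ∈ Finset.univ.erase (0:ZMod p), ω ^ (ZMod.val a) = -1 := by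
    have e1 := Finset.sum_erase_add Finset.univ (fun a : ZMod p => ω ^ (ZMod.val a))
      (Finset.mem_univ (0 : ZMod p))
    rw [hA] at e1
    have h0 : ω ^ (ZMod.val (0 : ZMod p)) = 1 := by rw [ZMod.val_zero, pow_zero]
    simp only [ZMod.val_zero, pow_zero] at e1
    linear_combination e1
  -- converse bridge
  have hbr' : ∀ a b : ℕ, ω ^ a = ω ^ b → ((a : ZMod p) = (b : ZMod p)) := by
    intro a b hab
    rw [hmodp a, hmodp b] at hab
    have e1 := hprim.pow_inj (Nat.mod_lt _ (by omega)) (Nat.mod_lt _ (by omega)) hab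
    rw [ZMod.natCast_eq_natCast_iff]
    show a % p = b % p
    exact e1
  -- the full product over all nontrivial roots
  have hP : ∏ u ∈ range (p-1), (1 - ω ^ (r ^ u)) = (p : ℂ) := by
    have hinj2 : ∀ a ∈ range (p-1), ∀ b ∈ range (p-1),
        ω ^ (r ^ a) = ω ^ (r ^ b) → a = b := by
      intro a ha b hb hab
      have e1 := hbr' _ _ hab
      push_cast at e1
      exact hinj a ha b hb e1
    have himg2 : (range (p-1)).image (fun u => ω ^ (r ^ u)) = primitiveRoots p ℂ := by
      apply Finset.eq_of_subset_of_card_le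
      · intro μ hμ
        simp only [Finset.mem_image, Finset.mem_range] at hμ
        obtain ⟨u, hu, rfl⟩ := hμ
        rw [mem_primitiveRoots (by omega : 0 < p)]
        exact hprim.pow_of_coprime _ (Nat.Coprime.pow_left u hcop)
      · rw [hprim.card_primitiveRoots, Nat.totient_prime hp,
          Finset.card_image_of_injOn (fun a ha b hb hab => hinj2 a ha b hb hab),
          Finset.card_range]
    have e1 : ∏ μ ∈ primitiveRoots p ℂ, (1 - μ) = (p:ℂ) := by
      have e2 := Polynomial.eval_one_cyclotomic_prime (R := ℂ) (p := p)
      rw [Polynomial.cyclotomic_eq_prod_X_sub_primitiveRoots hprim] at e2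
      simpa [Polynomial.eval_prod] using e2
    rw [← e1, ← himg2, Finset.prod_image hinj2]
  -- C^2 = (-1)^h * p
  have hC2 : C ^ 2 = (-1:ℂ)^h * p := by
    set S : ℕ := ∑ x ∈ range h, r ^ x with hSdef
    have split : ∏ u ∈ range (p-1), (1 - ω ^ (r ^ u)) =
        α * ∏ x ∈ range h, (1 - ω ^ (r ^ (h + x))) := by
      rw [hhh, Finset.prod_range_add, ← hα]
    have point : ∀ x : ℕ, (1 - ω ^ (r ^ (h + x))) * ω ^ (r ^ x) = -(1 - ω ^ (r ^ x)) := by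
      intro x
      have e1 : ω ^ (r ^ x) * ω ^ (r ^ (h + x)) = 1 := by
        rw [← pow_add]
        have e2 : ω ^ (r ^ x + r ^ (h + x)) = ω ^ (0 : ℕ) := by
          apply hbr
          push_cast
          rw [← hρdef, pow_add, hρh]
          ring
        rw [e2, pow_zero]
      linear_combination -e1
    have e3 : (∏ x ∈ range h, (1 - ω ^ (r ^ (h + x)))) * ω ^ S =
        (-1:ℂ)^h * α := by
      rw [hSdef, ← Finset.prod_pow_eq_pow_sum, ← Finset.prod_mul_distrib]
      simp only [point]
      rw [hα]
      calc ∏ x ∈ range h, -(1 - ω ^ r ^ x)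
          = ∏ x ∈ range h, ((-1) * (1 - ω ^ r ^ x)) := by
            apply Finset.prod_congr rfl; intros; ring
        _ = ((-1:ℂ)^h) * ∏ x ∈ range h, (1 - ω ^ r ^ x) := by
            rw [Finset.prod_mul_distrib, Finset.prod_const, Finset.card_range]
    -- combine: p * ω^S = (-1)^h * α^2
    have e4 : (p : ℂ) * ω ^ S = (-1:ℂ)^h * α^2 := by
      have := congrArg (fun w => w * ω ^ S) (hP.symm.trans split)
      rw [mul_assoc, e3] at this
      rw [this]; ring
    -- exponent identity
    have hSz : ((S : ℕ) : ZMod p) = -2 * (lam : ZMod p) := by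
      have g1 : ((S:ℕ) : ZMod p) * (ρ - 1) = ρ ^ h - 1 := by
        rw [hSdef]
        push_cast
        rw [← hρdef]
        exact geom_sum_mul ρ h
      rw [hρh] at g1
      have g2 : (((S:ℕ) : ZMod p) - (-2 * (lam : ZMod p))) * (ρ - 1) = 0 := by
        rw [sub_mul, g1]
        have : (-2 * (lam : ZMod p)) * (ρ - 1) = -2 * ((lam : ZMod p) * ((r : ZMod p) - 1)) := by
          rw [hρdef]; ring
        rw [this, hlamz]
        ring
      have hρ1 : ρ - 1 ≠ 0 := by
        intro hc
        have : ρ = 1 := by linear_combination hc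
        rw [this, orderOf_one] at hr
        omega
      have := mul_eq_zero.mp g2
      rcases this with h'|h'
      · linear_combination h'
      · exact absurd h' hρ1
    have hωS : ω ^ (2*lam) * ω ^ (S:ℕ) = 1 := by
      rw [← zpow_natCast ω S, ← zpow_add₀ hω0]
      have : ω ^ ((2*lam + (S:ℕ) : ℤ)) = ω ^ ((0:ℤ)) := by
        apply hbrz
        push_cast
        rw [hSz]
        ring
      rw [this, zpow_zero]
    -- assemble
    have e5 : C^2 = ω ^ (2*lam) * α^2 := by
      rw [hCdef, mul_pow, ← zpow_natCast (ω ^ lam) 2, ← zpow_mul]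
      have e5' : lam * ((2:ℕ):ℤ) = 2*lam := by push_cast; ring
      rw [e5']
    rw [e5]
    have e6 : α^2 = (-1:ℂ)^h * ((p:ℂ) * ω ^ S) := by
      rw [e4]
      have : ((-1:ℂ)^h) * ((-1:ℂ)^h) = 1 := by
        rw [← pow_add]
        rw [negpow_congr (h+h) 0 (by omega), pow_zero]
      rw [← mul_assoc, this, one_mul]
    rw [e6]
    calc ω ^ (2*lam) * ((-1:ℂ)^h * ((p:ℂ) * ω ^ S))
        = (-1:ℂ)^h * (p:ℂ) * (ω ^ (2*lam) * ω ^ S) := by ring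
      _ = (-1:ℂ)^h * p := by rw [hωS, mul_one]
  -- the character sum S(D)
  have hS : ∀ D : ℕ, ∑ u ∈ range (p-1), (1 - ω ^ (r ^ u)) * (1 - ω ^ (r ^ (u+D)))
      = if ρ ^ D = -1 then (2*(p:ℂ)) else (p:ℂ) := by
    intro D
    set c : ZMod p := ρ ^ D with hcdef
    have hc0 : c ≠ 0 := hunit D
    have e1 : ∑ u ∈ range (p-1), (1 - ω ^ (r ^ u)) * (1 - ω ^ (r ^ (u+D)))
        = ∑ a ∈ Finset.univ.erase (0:ZMod p),
            (1 - ω ^ (ZMod.val a)) * (1 - ω ^ (ZMod.val (a * c))) := by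
      rw [← hB1 (fun a => (1 - ω ^ (ZMod.val a)) * (1 - ω ^ (ZMod.val (a * c))))]
      apply Finset.sum_congr rfl
      intro u _
      have b1 : ω ^ (r ^ u) = ω ^ (ZMod.val (ρ ^ u)) := by
        apply hbr
        rw [hvalcast]
        push_cast
        rfl
      have b2 : ω ^ (r ^ (u+D)) = ω ^ (ZMod.val (ρ ^ u * c)) := by
        apply hbr
        rw [hvalcast, hcdef, ← pow_add]
        push_cast
        rfl
      rw [b1, b2]
    rw [e1]
    have e2 : ∑ a ∈ Finset.univ.erase (0:ZMod p),
        (1 - ω ^ (ZMod.val a)) * (1 - ω ^ (ZMod.val (a * c)))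
        = (∑ a ∈ Finset.univ.erase (0:ZMod p), (1:ℂ))
          - (∑ a ∈ Finset.univ.erase (0:ZMod p), ω ^ (ZMod.val a))
          - (∑ a ∈ Finset.univ.erase (0:ZMod p), ω ^ (ZMod.val (a * c)))
          + ∑ a ∈ Finset.univ.erase (0:ZMod p), ω ^ (ZMod.val a) * ω ^ (ZMod.val (a * c)) := by
      rw [← Finset.sum_sub_distrib, ← Finset.sum_sub_distrib, ← Finset.sum_add_distrib]
      apply Finset.sum_congr rfl
      intros; ring
    rw [e2, hE, hB2 c hc0 (fun a => ω ^ (ZMod.val a)), hE]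
    have ecard : ∑ a ∈ Finset.univ.erase (0:ZMod p), (1:ℂ) = ((p:ℂ) - 1) := by
      rw [Finset.sum_const, Finset.card_erase_of_mem (Finset.mem_univ _),
        Finset.card_univ, ZMod.card, nsmul_eq_mul, mul_one]
      push_cast [Nat.cast_sub (by omega : 1 ≤ p)]
      ring
    rw [ecard]
    have e3 : ∀ a : ZMod p, ω ^ (ZMod.val a) * ω ^ (ZMod.val (a * c)) = ω ^ (ZMod.val (a * (1 + c))) := by
      intro a
      rw [← pow_add]
      apply hbr
      push_cast [hvalcast]
      ring
    simp only [e3]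
    by_cases hcase : (1:ZMod p) + c = 0
    · have hcm : ρ ^ D = -1 := by
        rw [hcdef] at hcase
        linear_combination hcase
      rw [if_pos hcm]
      have e4 : ∀ a : ZMod p, a * (1 + c) = 0 := by
        intro a; rw [hcase, mul_zero]
      have e5 : ∑ a ∈ Finset.univ.erase (0:ZMod p), ω ^ (ZMod.val (a * (1 + c)))
          = ∑ a ∈ Finset.univ.erase (0:ZMod p), (1:ℂ) := by
        apply Finset.sum_congr rfl
        intro a _
        rw [e4, ZMod.val_zero, pow_zero]
      rw [e5, ecard]
      ring
    · have hcm : ¬ (ρ ^ D = -1) := by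
        intro hc
        apply hcase
        rw [hcdef, hc]
        ring
      rw [if_neg hcm]
      have e6 := hB2 (1 + c) hcase (fun a => ω ^ (ZMod.val a))
      rw [e6, hE]
      ring
  -- autocorrelation f(D)
  have hf : ∀ D : ℕ, ∑ u ∈ range (p-1), g u * g (u + D)
      = (-1:ℂ)^D * ((-1:ℂ)^h * p) * (if ρ ^ D = -1 then (2*(p:ℂ)) else (p:ℂ)) := by
    intro D
    have e1 : ∀ u : ℕ, g u * g (u+D)
        = (-1:ℂ)^D * C^2 * ((1 - ω^(r^u)) * (1 - ω^(r^(u+D)))) := by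
      intro u
      have h2 : (-1:ℂ)^u * (-1:ℂ)^u = 1 := by
        rw [← pow_add, negpow_congr (u+u) 0 (by omega), pow_zero]
      calc g u * g (u+D) = ((-1:ℂ)^u * (-1:ℂ)^u) * ((-1:ℂ)^D * C^2 * ((1 - ω^(r^u)) * (1 - ω^(r^(u+D))))) := by
            rw [hgu, hgu, pow_add]; ring
        _ = (-1:ℂ)^D * C^2 * ((1 - ω^(r^u)) * (1 - ω^(r^(u+D)))) := by rw [h2, one_mul]
    simp only [e1]
    rw [← Finset.mul_sum, hS D, hC2]
  -- expansions of x
  have hσux : ∀ u : ℕ, (σ ^ u) x = ∑ a ∈ Finset.Icc 1 m, g (u + a * n) := by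
    intro u
    rw [hx, map_sum]
    apply Finset.sum_congr rfl
    intro a _
    rw [hgdef]
    simp only
    rw [← hmulapply]
  have hx0 : x = ∑ a ∈ Finset.Icc 1 m, g (a * n) := by
    have := hσux 0
    rw [pow_zero] at this
    simpa using this
  have hicc : Finset.Icc 1 m = insert 1 (Finset.Icc 2 m) := by
    ext a
    simp only [Finset.mem_Icc, Finset.mem_insert]
    omega
  have hσnx : (σ ^ n) x = x := by
    rw [hσux n]
    have e1 : ∑ a ∈ Finset.Icc 1 m, g (n + a * n) = ∑ b ∈ Finset.Icc 2 (m+1), g (b * n) := by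
      apply Finset.sum_nbij' (i := fun a => a + 1) (j := fun b => b - 1)
      · intro a ha
        have := Finset.mem_Icc.mp ha
        exact Finset.mem_Icc.mpr (by omega)
      · intro b hb
        have := Finset.mem_Icc.mp hb
        exact Finset.mem_Icc.mpr (by omega)
      · intro a _; omega
      · intro b hb
        have := Finset.mem_Icc.mp hb
        omega
      · intro a _
        congr 1
        ring
    rw [e1, Finset.sum_Icc_succ_top (by omega : 2 ≤ m + 1)]
    have e2 : g ((m+1) * n) = g (1 * n) := by
      have e3 : (m+1) * n = 1 * n + (p - 1) := by
        rw [hm]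
        ring
      rw [e3, hgper]
    rw [e2, hx0, hicc, Finset.sum_insert (by simp)]
    ring
  have hxper : ∀ u : ℕ, (σ ^ (u + n)) x = (σ ^ u) x := by
    intro u
    rw [hmulapply u n, hσnx]
  -- condition characterization
  have hcond : ∀ D : ℕ, (ρ ^ D = -1) ↔ (D ≡ n * m2 [MOD n * m]) := by
    intro D
    constructor
    · intro hD
      have e1 : ρu ^ D = ρu ^ h := by
        apply Units.ext
        rw [hρpow, hρpow, hD, hρh]
      have e2 := pow_eq_pow_iff_modEq.mp e1
      rw [horder] at e2
      rw [← hh, ← hm]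
      exact e2
    · intro hD
      have e1 : ρu ^ D = ρu ^ h := by
        apply pow_eq_pow_iff_modEq.mpr
        rw [horder, hm, hh]
        exact hD
      have e2 : ρ ^ D = ρ ^ h := by
        rw [← hρpow, ← hρpow, e1]
      rw [e2, hρh]
  have hnodd2 : n % 2 = 1 := Nat.odd_iff.mp hnodd
  -- the T sum
  have hT : ∀ t : ℕ, t < n → ∑ u ∈ range (p-1), (σ ^ u) x * (σ ^ (u+t)) x
      = if t = 0 then (m:ℂ) * (p:ℂ)^2 else 0 := by
    intro t ht
    have e1 : ∑ u ∈ range (p-1), (σ ^ u) x * (σ ^ (u+t)) x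
        = ∑ a ∈ Finset.Icc 1 m, ∑ b ∈ Finset.Icc 1 m,
            ∑ u ∈ range (p-1), g (u + a*n) * g (u + t + b*n) := by
      have s1 : ∑ u ∈ range (p-1), (σ ^ u) x * (σ ^ (u+t)) x
          = ∑ u ∈ range (p-1), ∑ a ∈ Finset.Icc 1 m, ∑ b ∈ Finset.Icc 1 m,
              g (u + a*n) * g (u + t + b*n) := by
        apply Finset.sum_congr rfl
        intro u _
        rw [hσux u, hσux (u+t), Finset.sum_mul_sum]
      rw [s1, Finset.sum_comm]
      apply Finset.sum_congr rfl
      intro a _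
      rw [Finset.sum_comm]
    have e2 : ∀ a ∈ Finset.Icc 1 m, ∀ b ∈ Finset.Icc 1 m,
        ∑ u ∈ range (p-1), g (u + a*n) * g (u + t + b*n)
        = (-1:ℂ)^(t + (b + (m-a))*n) * ((-1:ℂ)^h * p) *
          (if ρ ^ (t + (b + (m-a))*n) = -1 then (2*(p:ℂ)) else (p:ℂ)) := by
      intro a ha b hb
      have haa := Finset.mem_Icc.mp ha
      have key : ∀ u : ℕ, g (u + t + b*n) = g ((u + a*n) + (t + (b + (m-a))*n)) := by
        intro u
        obtain ⟨c', hc1, hc2⟩ : ∃ c', m = a + c' ∧ m - a = c' := ⟨m - a, by omega, rfl⟩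
        have e3 : (u + a*n) + (t + (b + (m-a))*n) = (u + t + b*n) + (p-1) := by
          rw [hc2, hm, hc1]
          ring
        rw [e3, hgper]
      have e4 : ∑ u ∈ range (p-1), g (u + a*n) * g (u + t + b*n)
          = ∑ u ∈ range (p-1), (fun v => g v * g (v + (t + (b + (m-a))*n))) (u + a*n) := by
        apply Finset.sum_congr rfl
        intro u _
        simp only
        rw [key]
      have hper : ∀ v, (fun v => g v * g (v + (t + (b + (m-a))*n))) (v + (p-1))
          = (fun v => g v * g (v + (t + (b + (m-a))*n))) v := by
        intro v
        simp only
        have e5 : v + (p-1) + (t + (b + (m-a))*n) = (v + (t + (b + (m-a))*n)) + (p-1) := by omega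
        rw [hgper, e5, hgper]
      exact e4.trans ((sum_shift _ _ hper (a*n)).trans (hf _))
    rw [e1, Finset.sum_congr rfl (fun a ha => Finset.sum_congr rfl (fun b hb => e2 a ha b hb))]
    -- now rewrite sign and condition
    have e6 : ∀ a ∈ Finset.Icc 1 m, ∀ b ∈ Finset.Icc 1 m,
        (-1:ℂ)^(t + (b + (m-a))*n) * ((-1:ℂ)^h * p) *
          (if ρ ^ (t + (b + (m-a))*n) = -1 then (2*(p:ℂ)) else (p:ℂ))
        = (-1:ℂ)^(t + a + b) * ((-1:ℂ)^h * p) *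
          ((p:ℂ) + (if (t = 0 ∧ (b + (m-a) = m2 ∨ b + (m-a) = m2 + m)) then (p:ℂ) else 0)) := by
      intro a ha b hb
      have haa := Finset.mem_Icc.mp ha
      have hbb := Finset.mem_Icc.mp hb
      have hq := Nat.mul_mod (b + (m-a)) n 2
      rw [hnodd2, Nat.mul_one] at hq
      have hpar : (t + (b + (m-a))*n) % 2 = (t + a + b) % 2 := by omega
      rw [negpow_congr _ _ hpar]
      congr 1
      have hcnd : (ρ ^ (t + (b + (m-a))*n) = -1)
          ↔ (t = 0 ∧ (b + (m-a) = m2 ∨ b + (m-a) = m2 + m)) := by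
        rw [hcond]
        exact aux_arith n m m2 t (b + (m-a)) hn3 hm21 hmm2 ht (by omega) (by omega)
      rw [if_congr hcnd rfl rfl]
      split_ifs <;> ring
    rw [Finset.sum_congr rfl (fun a ha => Finset.sum_congr rfl (fun b hb => e6 a ha b hb))]
    -- split into two sums
    have e7 : ∀ a b : ℕ,
        (-1:ℂ)^(t + a + b) * ((-1:ℂ)^h * p) *
          ((p:ℂ) + (if (t = 0 ∧ (b + (m-a) = m2 ∨ b + (m-a) = m2 + m)) then (p:ℂ) else 0))
        = (-1:ℂ)^(t + a + b) * (((-1:ℂ)^h * p) * p)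
          + (-1:ℂ)^(t + a + b) * ((-1:ℂ)^h * p) *
            (if (t = 0 ∧ (b + (m-a) = m2 ∨ b + (m-a) = m2 + m)) then (p:ℂ) else 0) := by
      intro a b
      ring
    simp only [e7, Finset.sum_add_distrib]
    -- first part vanishes
    have hb0 : ∑ b ∈ Finset.Icc 1 m, (-1:ℂ)^b = 0 := by
      rw [hmm2]
      exact alt_sum m2
    have hzero : ∑ a ∈ Finset.Icc 1 m, ∑ b ∈ Finset.Icc 1 m,
        ((-1:ℂ)^(t + a + b) * (((-1:ℂ)^h * p) * p)) = 0 := by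
      have inner0 : ∀ a : ℕ, ∑ b ∈ Finset.Icc 1 m,
          ((-1:ℂ)^(t + a + b) * (((-1:ℂ)^h * p) * p)) = 0 := by
        intro a
        have : ∀ b : ℕ, (-1:ℂ)^(t + a + b) * (((-1:ℂ)^h * p) * p)
            = (-1:ℂ)^b * ((-1:ℂ)^(t + a) * (((-1:ℂ)^h * p) * p)) := by
          intro b
          rw [pow_add]
          ring
        simp only [this]
        rw [← Finset.sum_mul, hb0, zero_mul]
      simp only [inner0, Finset.sum_const_zero]
    rw [hzero, zero_add]
    by_cases hct : t = 0
    · subst hct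
      rw [if_pos rfl]
      have inner1 : ∀ a ∈ Finset.Icc 1 m, ∑ b ∈ Finset.Icc 1 m,
          ((-1:ℂ)^(0 + a + b) * ((-1:ℂ)^h * p) *
            (if (0 = 0 ∧ (b + (m-a) = m2 ∨ b + (m-a) = m2 + m)) then (p:ℂ) else 0))
          = (-1:ℂ)^(m2) * ((-1:ℂ)^h * p) * p := by
        intro a ha
        have haa := Finset.mem_Icc.mp ha
        by_cases hcase : a ≤ m2
        · have hcnd2 : ∀ b ∈ Finset.Icc 1 m,
              ((0 = 0 ∧ (b + (m-a) = m2 ∨ b + (m-a) = m2 + m)) ↔ b = a + m2) := by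
            intro b hb
            have hbb := Finset.mem_Icc.mp hb
            constructor
            · rintro ⟨-, hc|hc⟩ <;> omega
            · intro hc
              exact ⟨rfl, Or.inr (by omega)⟩
          rw [Finset.sum_congr rfl (fun b hb => by
            rw [if_congr (hcnd2 b hb) rfl rfl])]
          have hsplit : ∀ b : ℕ, (-1:ℂ)^(0 + a + b) * ((-1:ℂ)^h * p) * (if b = a + m2 then (p:ℂ) else 0)
              = (if b = a + m2 then ((-1:ℂ)^(0 + a + b) * ((-1:ℂ)^h * p) * p) else 0) := by
            intro b
            split_ifs <;> ring
          simp only [hsplit]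
          rw [Finset.sum_ite_eq' (Finset.Icc 1 m) (a + m2)
            (fun b => (-1:ℂ)^(0 + a + b) * ((-1:ℂ)^h * p) * p)]
          rw [if_pos (Finset.mem_Icc.mpr (by omega))]
          rw [negpow_congr (0 + a + (a + m2)) m2 (by omega)]
        · have hcnd2 : ∀ b ∈ Finset.Icc 1 m,
              ((0 = 0 ∧ (b + (m-a) = m2 ∨ b + (m-a) = m2 + m)) ↔ b = a - m2) := by
            intro b hb
            have hbb := Finset.mem_Icc.mp hb
            constructor
            · rintro ⟨-, hc|hc⟩ <;> omega
            · intro hc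
              exact ⟨rfl, Or.inl (by omega)⟩
          rw [Finset.sum_congr rfl (fun b hb => by
            rw [if_congr (hcnd2 b hb) rfl rfl])]
          have hsplit : ∀ b : ℕ, (-1:ℂ)^(0 + a + b) * ((-1:ℂ)^h * p) * (if b = a - m2 then (p:ℂ) else 0)
              = (if b = a - m2 then ((-1:ℂ)^(0 + a + b) * ((-1:ℂ)^h * p) * p) else 0) := by
            intro b
            split_ifs <;> ring
          simp only [hsplit]
          rw [Finset.sum_ite_eq' (Finset.Icc 1 m) (a - m2)
            (fun b => (-1:ℂ)^(0 + a + b) * ((-1:ℂ)^h * p) * p)]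
          rw [if_pos (Finset.mem_Icc.mpr (by omega))]
          rw [negpow_congr (0 + a + (a - m2)) m2 (by omega)]
      rw [Finset.sum_congr rfl inner1, Finset.sum_const, Nat.card_Icc]
      have hq2 := Nat.mul_mod n m2 2
      rw [hnodd2, Nat.one_mul] at hq2
      have hpar2 : ((-1:ℂ)^(m2) * (-1:ℂ)^h) = 1 := by
        rw [← pow_add, negpow_congr (m2 + h) 0 (by rw [hh]; omega), pow_zero]
      have : m + 1 - 1 = m := by omega
      rw [this, nsmul_eq_mul]
      calc (m:ℂ) * ((-1:ℂ)^(m2) * ((-1:ℂ)^h * p) * p)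
          = ((-1:ℂ)^(m2) * (-1:ℂ)^h) * ((m:ℂ) * p * p) := by ring
        _ = (m:ℂ) * (p:ℂ)^2 := by rw [hpar2]; ring
    · rw [if_neg hct]
      have innerz : ∀ a ∈ Finset.Icc 1 m, ∑ b ∈ Finset.Icc 1 m,
          ((-1:ℂ)^(t + a + b) * ((-1:ℂ)^h * p) *
            (if (t = 0 ∧ (b + (m-a) = m2 ∨ b + (m-a) = m2 + m)) then (p:ℂ) else 0)) = 0 := by
        intro a _
        apply Finset.sum_eq_zero
        intro b _
        rw [if_neg (fun hc => hct hc.1), mul_zero]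
      rw [Finset.sum_congr rfl innerz, Finset.sum_const_zero]
  -- key circular correlation over one period
  have hkey : ∀ i j : ℕ, i < n → j < n → i ≤ j →
      ∑ k ∈ range n, (σ ^ (i+k)) x * (σ ^ (j+k)) x = if i = j then (p:ℂ)^2 else 0 := by
    intro i j hi hj hij
    set t := j - i with htdef
    have ht : t < n := by omega
    have hFper : ∀ u, (σ ^ (u+n)) x * (σ ^ ((u+n) + t)) x
        = (σ ^ u) x * (σ ^ (u + t)) x := by
      intro u
      rw [hxper u]
      congr 1
      have e1 : u + n + t = (u + t) + n := by omega
      rw [e1, hxper]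
    have e1 : ∑ k ∈ range n, (σ ^ (i+k)) x * (σ ^ (j+k)) x
        = ∑ k ∈ range n, (σ ^ (k+i)) x * (σ ^ ((k+i) + t)) x := by
      apply Finset.sum_congr rfl
      intro k _
      have e2 : i + k = k + i := by omega
      have e3 : j + k = (k + i) + t := by omega
      rw [e2, e3]
    have e2 : ∑ k ∈ range n, (σ ^ (k+i)) x * (σ ^ ((k+i) + t)) x
        = ∑ k ∈ range n, (σ ^ k) x * (σ ^ (k + t)) x :=
      sum_shift (fun u => (σ ^ u) x * (σ ^ (u + t)) x) n hFper i
    have e4 : ∑ u ∈ range (n*m), (σ ^ u) x * (σ ^ (u + t)) x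
        = (m:ℂ) * ∑ k ∈ range n, (σ ^ k) x * (σ ^ (k + t)) x :=
      sum_period (fun u => (σ ^ u) x * (σ ^ (u + t)) x) n hFper m
    have hm0 : (m:ℂ) ≠ 0 := Nat.cast_ne_zero.mpr (by omega)
    apply mul_left_cancel₀ hm0
    calc (m:ℂ) * ∑ k ∈ range n, (σ ^ (i+k)) x * (σ ^ (j+k)) x
        = ∑ u ∈ range (n*m), (σ ^ u) x * (σ ^ (u + t)) x := by rw [e1, e2, e4]
      _ = ∑ u ∈ range (p-1), (σ ^ u) x * (σ ^ (u + t)) x := by rw [← hm]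
      _ = if t = 0 then (m:ℂ) * (p:ℂ)^2 else 0 := hT t ht
      _ = (m:ℂ) * (if i = j then (p:ℂ)^2 else 0) := by
          by_cases hc : t = 0
          · rw [if_pos hc, if_pos (by omega)]
          · rw [if_neg hc, if_neg (by omega), mul_zero]
  -- assemble the matrix identity
  have hp0 : (p:ℂ) ≠ 0 := Nat.cast_ne_zero.mpr (by omega)
  ext i j
  rw [Matrix.mul_apply, Matrix.one_apply]
  simp only [Matrix.transpose_apply, hG]
  have conv1 : ∀ k : Fin n, (1/(p:ℂ) * (σ^((i:ℕ)+(k:ℕ))) x) * (1/(p:ℂ) * (σ^((j:ℕ)+(k:ℕ))) x)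
      = 1/(p:ℂ)^2 * ((σ^((i:ℕ)+(k:ℕ))) x * (σ^((j:ℕ)+(k:ℕ))) x) := by
    intro k
    ring
  rw [Finset.sum_congr rfl (fun k _ => conv1 k), ← Finset.mul_sum]
  have convr : ∑ k : Fin n, ((σ^((i:ℕ)+(k:ℕ))) x * (σ^((j:ℕ)+(k:ℕ))) x)
      = ∑ k ∈ range n, ((σ^((i:ℕ)+k)) x * (σ^((j:ℕ)+k)) x) :=
    Fin.sum_univ_eq_sum_range (fun k => (σ^((i:ℕ)+k)) x * (σ^((j:ℕ)+k)) x) n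
  rw [convr]
  rcases le_total (i:ℕ) (j:ℕ) with hij|hij
  · rw [hkey (i:ℕ) (j:ℕ) i.isLt j.isLt hij]
    by_cases hc : (i:ℕ) = (j:ℕ)
    · rw [if_pos hc, if_pos (Fin.ext hc)]
      field_simp
    · rw [if_neg hc, if_neg (fun hcc => hc (congrArg Fin.val hcc)), mul_zero]
  · have esw : ∑ k ∈ range n, ((σ^((i:ℕ)+k)) x * (σ^((j:ℕ)+k)) x)
        = ∑ k ∈ range n, ((σ^((j:ℕ)+k)) x * (σ^((i:ℕ)+k)) x) := by
      apply Finset.sum_congr rfl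
      intros
      ring
    rw [esw, hkey (j:ℕ) (i:ℕ) j.isLt i.isLt hij]
    by_cases hc : (i:ℕ) = (j:ℕ)
    · rw [if_pos hc.symm, if_pos (Fin.ext hc)]
      field_simp
    · rw [if_neg (fun hcc => hc hcc.symm), if_neg (fun hcc => hc (congrArg Fin.val hcc)), mul_zero]
end

section
/- Let L/F be a Galois extension of number fields of degree n with rings of integers 𝒪_L, 𝒪_F, let 𝔭 be a prime ideal of 𝒪_F lying below a prime ideal 𝔓 of 𝒪_L with inertial degree f (i.e., ‖𝔓‖ = ‖𝔭‖^f). If γ ∈ 𝔭 \ 𝔭², then γ^i is not a norm from L to F for any i = 1, 2, ..., f−1. -/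
/-!
For every ideal `I` of `𝓞 L`, the `p`-adic valuation of its relative norm is a multiple of `f`:
the relative norm is multiplicative, a prime of `𝓞 L` not above `p` has relative norm a power of
another prime, and, `L / F` being Galois, every prime above `p` is conjugate to `P` and so has
relative norm `p ^ f`. If `N(a / b) = γ ^ i` with `a, b ∈ 𝓞 L`, then
`relNorm (a) = (γ) ^ i * relNorm (b)`; since `γ` has `p`-adic valuation `1`, comparing valuations
gives `f ∣ i`, which is impossible for `0 < i < f`.
-/

open NumberField Ideal UniqueFactorizationMonoid

section relNorm

variable {R S : Type*} [CommRing R] [CommRing S] [IsDedekindDomain R] [IsDedekindDomain S]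
  [Algebra R S] [Module.Finite R S] [Module.IsTorsionFree R S]

theorem Ideal.count_normalizedFactors_relNorm_of_not_liesOver {p : Ideal R} [p.IsPrime]
    {Q : Ideal S} (hQ : Prime Q) (hQp : ¬ Q.LiesOver p) :
    (normalizedFactors (relNorm R Q)).count p = 0 := by
  have : Q.IsPrime := isPrime_of_prime hQ
  have : Q.IsMaximal := this.isMaximal hQ.ne_zero
  rw [Multiset.count_eq_zero, mem_normalizedFactors_iff (relNorm_eq_bot_iff.not.mpr hQ.ne_zero)]
  rintro ⟨-, hle⟩
  obtain ⟨s, hs⟩ := exists_relNorm_eq_pow_of_isPrime Q (Q.under R)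
  rw [hs] at hle
  exact hQp ⟨(IsMaximal.eq_of_le inferInstance IsPrime.ne_top' (IsPrime.le_of_pow_le hle)).symm⟩

theorem Ideal.dvd_count_normalizedFactors_relNorm {p : Ideal R} [p.IsPrime] (hp : p ≠ ⊥)
    {f : ℕ} (hf : ∀ Q : Ideal S, Q.IsPrime → Q.LiesOver p → relNorm R Q = p ^ f)
    (I : Ideal S) : f ∣ (normalizedFactors (relNorm R I)).count p := by
  induction I using UniqueFactorizationMonoid.induction_on_prime with
  | h₁ => simp only [map_zero, normalizedFactors_zero, Multiset.count_zero, dvd_zero]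
  | h₂ u hu => simp [Ideal.isUnit_iff.mp hu, ← one_eq_top]
  | h₃ I Q hI hQ ih =>
    rw [map_mul, normalizedFactors_mul (by simpa using hQ.ne_zero) (by simpa using hI),
      Multiset.count_add]
    refine dvd_add ?_ ih
    by_cases hQp : Q.LiesOver p
    · rw [hf Q (isPrime_of_prime hQ) hQp,
        normalizedFactors_of_irreducible_pow (prime_of_isPrime hp inferInstance).irreducible,
        normalize_eq, Multiset.count_replicate_self]
    · rw [count_normalizedFactors_relNorm_of_not_liesOver hQ hQp]
      exact dvd_zero f

end relNorm

section NumberField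

variable {F L : Type*} [Field F] [Field L] [NumberField F] [NumberField L] [Algebra F L]

theorem Ideal.relNorm_eq_of_liesOver_of_isGalois [IsGalois F L] (p : Ideal (𝓞 F))
    (P Q : Ideal (𝓞 L)) [P.IsPrime] [P.LiesOver p] [Q.IsPrime] [Q.LiesOver p] :
    relNorm (𝓞 F) Q = relNorm (𝓞 F) P := by
  obtain ⟨σ, rfl⟩ := exists_comap_galRestrict_eq (𝓞 F) F L (𝓞 L)
    (p := p) ⟨‹P.IsPrime›, ‹_›⟩ ⟨‹Q.IsPrime›, ‹_›⟩
  exact relNorm_comap_algEquiv _ P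

theorem Ideal.relNorm_eq_pow_of_absNorm_eq_pow {p : Ideal (𝓞 F)} (hp : p ≠ ⊥)
    (P : Ideal (𝓞 L)) [P.IsPrime] [P.LiesOver p] {f : ℕ}
    (hf : absNorm P = absNorm p ^ f) : relNorm (𝓞 F) P = p ^ f := by
  have : p.IsPrime := P.over_def p ▸ inferInstance
  obtain ⟨s, hs⟩ := exists_relNorm_eq_pow_of_isPrime P p
  have hp2 : 2 ≤ absNorm p := by
    have h0 : absNorm p ≠ 0 := absNorm_eq_zero_iff.not.mpr hp
    have h1 : absNorm p ≠ 1 := absNorm_eq_one_iff.not.mpr IsPrime.ne_top'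
    omega
  have hsf : absNorm p ^ s = absNorm p ^ f := by
    rw [← map_pow, ← hs, absNorm_relNorm, hf]
  rwa [← Nat.pow_right_injective hp2 hsf]

theorem Algebra.intNorm_eq_mul_of_norm_div_eq {a b : 𝓞 L} (hb : b ≠ 0) {c : 𝓞 F}
    (h : Algebra.norm F (algebraMap (𝓞 L) L a / algebraMap (𝓞 L) L b) = algebraMap (𝓞 F) F c) :
    Algebra.intNorm (𝓞 F) (𝓞 L) a = c * Algebra.intNorm (𝓞 F) (𝓞 L) b := by
  have hbL : algebraMap (𝓞 L) L b ≠ 0 := by simpa using hb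
  apply IsFractionRing.injective (𝓞 F) F
  rw [map_mul, Algebra.algebraMap_intNorm (L := L), Algebra.algebraMap_intNorm (L := L), ← h,
    ← map_mul, div_mul_cancel₀ _ hbL]

end NumberField

theorem non_norm_of_mem_prime_not_sq_general
    (F L : Type*) [Field F] [Field L] [NumberField F] [NumberField L]
    [Algebra F L] [IsGalois F L]
    (P : Ideal (𝓞 L)) (hP : P.IsPrime)
    (p : Ideal (𝓞 F)) (hp : p = P.comap (algebraMap (𝓞 F) (𝓞 L)))
    (f : ℕ) (hf : Ideal.absNorm P = Ideal.absNorm p ^ f)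
    (γ : 𝓞 F) (hγ : γ ∈ p) (hγ2 : γ ∉ p ^ 2) :
    ∀ i : ℕ, 1 ≤ i → i ≤ f - 1 →
      ∀ ℓ : L, Algebra.norm F ℓ ≠ (algebraMap (𝓞 F) F γ) ^ i := by
  intro i hi hif ℓ hℓ
  have : P.LiesOver p := ⟨hp⟩
  have : p.IsPrime := hp ▸ hP.comap _
  have hγ0 : γ ≠ 0 := fun h => hγ2 (h ▸ zero_mem _)
  have hp0 : p ≠ ⊥ := fun h => hγ0 (by simpa [h] using hγ)
  have hdvd : ∀ I : Ideal (𝓞 L), f ∣ (normalizedFactors (relNorm (𝓞 F) I)).count p :=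
    dvd_count_normalizedFactors_relNorm hp0 fun Q _ _ =>
      (relNorm_eq_of_liesOver_of_isGalois p P Q).trans (relNorm_eq_pow_of_absNorm_eq_pow hp0 P hf)
  have hγp : (normalizedFactors (span {γ})).count p = 1 :=
    count_normalizedFactors_eq (by simpa [span_singleton_le_iff_mem] using hγ)
      (by simpa [span_singleton_le_iff_mem] using hγ2)
  obtain ⟨a, b, hb, rfl⟩ := IsFractionRing.div_surjective (A := 𝓞 L) ℓ
  have hb0 : b ≠ 0 := nonZeroDivisors.ne_zero hb
  have hcount : (normalizedFactors (relNorm (𝓞 F) (span {a}))).count p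
      = i + (normalizedFactors (relNorm (𝓞 F) (span {b}))).count p := by
    rw [relNorm_singleton,
      Algebra.intNorm_eq_mul_of_norm_div_eq hb0 (hℓ.trans (map_pow _ γ i).symm),
      ← span_singleton_mul_span_singleton, ← span_singleton_pow,
      normalizedFactors_mul (pow_ne_zero _ (by simpa using hγ0)) (by simpa using hb0),
      ← relNorm_singleton, Multiset.count_add, normalizedFactors_pow, Multiset.count_nsmul, hγp,
      mul_one]
  have hfi : f ∣ i := (Nat.dvd_add_left (hdvd _)).mp (hcount ▸ hdvd _)
  exact absurd (Nat.le_of_dvd hi hfi) (by omega)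

theorem non_norm_of_mem_prime_not_sq
    (F L : Type*) [Field F] [Field L] [NumberField F] [NumberField L]
    [Algebra F L] [FiniteDimensional F L] [IsGalois F L]
    (n : ℕ) (hn : Module.finrank F L = n)
    (P : Ideal (𝓞 L)) (hP : P.IsPrime)
    (p : Ideal (𝓞 F)) (hp : p = P.comap (algebraMap (𝓞 F) (𝓞 L)))
    (f : ℕ) (hf : Ideal.absNorm P = Ideal.absNorm p ^ f)
    (γ : 𝓞 F) (hγ : γ ∈ p) (hγ2 : γ ∉ p ^ 2) :
    ∀ i : ℕ, 1 ≤ i → i ≤ f - 1 →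
      ∀ ℓ : L, Algebra.norm F ℓ ≠ (algebraMap (𝓞 F) F γ) ^ i :=
  non_norm_of_mem_prime_not_sq_general F L P hP p hp f hf γ hγ hγ2
end

section
/- Let F = ℚ(i), let L/F be a cyclic Galois extension of degree n with Galois group generated by σ, and let π ∈ ℤ[i] be a prime with σ-invariant prime ideal (π)𝒪_L that is prime in 𝒪_L (π inert in L/F), and π̄ its conjugate, also inert, with (π) ≠ (π̄). If γ = π/π̄ satisfies γ^k = N_{L/F}(ℓ) for some ℓ ∈ Lˣ and k ≥ 1, then n divides k. -/
/-!
Write ℓ = a / y with a integral and y ∈ ℤ[i]. The norm equation becomes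
y ^ n * π ^ k = π̄ ^ k * ∏ σ, σ a in the ring of integers of L. Since π is fixed by the Galois
group it has the same multiplicity in every conjugate σ a, and it does not divide π̄, so comparing
multiplicities of π on both sides gives n * v(y) + k = n * v(a).
-/

open NumberField

noncomputable abbrev QadjI : Type := FractionRing GaussianInt

theorem emultiplicity_algebraMap_algEquiv_apply {R B : Type*} [CommSemiring R] [CommSemiring B]
    [Algebra R B] (p : R) (σ : B ≃ₐ[R] B) (x : B) :
    emultiplicity (algebraMap R B p) (σ x) = emultiplicity (algebraMap R B p) x := by
  conv_lhs => rw [← σ.commutes p]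
  exact emultiplicity_map_eq σ

theorem dvd_of_mul_pow_eq_pow_mul {α : Type*} [CommMonoidWithZero α] [IsCancelMulZero α]
    {p q c z : α} {n k mc mz : ℕ} (hp : Prime p) (hpq : ¬p ∣ q) (h : c * p ^ k = q ^ k * z)
    (hc : emultiplicity p c = n * mc) (hz : emultiplicity p z = n * mz) : n ∣ k := by
  have hmult := congrArg (emultiplicity p) h
  rw [emultiplicity_mul hp, emultiplicity_mul hp, emultiplicity_pow_self_of_prime hp,
    emultiplicity_pow hp, emultiplicity_eq_zero.mpr hpq, hc, hz, mul_zero, zero_add] at hmult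
  exact (Nat.dvd_add_right (dvd_mul_right n mc)).mp ⟨mz, by exact_mod_cast hmult⟩

section

variable {A K L B : Type*} [CommRing A] [CommRing B] [Field K] [Field L]
  [Algebra A K] [IsFractionRing A K] [Algebra K L] [Algebra A L] [IsScalarTower A K L]
  [Algebra B L] [IsIntegralClosure B A L]

theorem exists_algebraMap_mul_eq_algebraMap [IsDomain A] [Algebra.IsAlgebraic K L] (ℓ : L) :
    ∃ y : A, y ≠ 0 ∧ ∃ x : B, algebraMap A L y * ℓ = algebraMap B L x := by
  have hℓ : IsAlgebraic A ℓ :=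
    (IsFractionRing.isAlgebraic_iff A K L).mpr (Algebra.IsAlgebraic.isAlgebraic ℓ)
  obtain ⟨y, hy, hint⟩ := hℓ.exists_integral_multiple
  exact ⟨y, hy, IsIntegralClosure.mk' B _ hint,
    by rw [IsIntegralClosure.algebraMap_mk', Algebra.smul_def]⟩

variable [Algebra A B] [IsScalarTower A B L] [FiniteDimensional K L] [IsGalois K L]

theorem algebraMap_norm_eq_prod_galRestrict (x : B) :
    algebraMap K L (Algebra.norm K (algebraMap B L x)) =
      algebraMap B L (∏ σ : L ≃ₐ[K] L, galRestrict A K L B σ x) := by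
  simp only [Algebra.norm_eq_prod_automorphisms, map_prod, algebraMap_galRestrict_apply]

theorem emultiplicity_prod_galRestrict [IsDomain B] {p : A} (hp : Prime (algebraMap A B p))
    (x : B) :
    emultiplicity (algebraMap A B p) (∏ σ : L ≃ₐ[K] L, galRestrict A K L B σ x) =
      Module.finrank K L * emultiplicity (algebraMap A B p) x := by
  rw [Finset.emultiplicity_prod hp]
  simp only [emultiplicity_algebraMap_algEquiv_apply, Finset.sum_const, Finset.card_univ,
    ← Nat.card_eq_fintype_card, IsGalois.card_aut_eq_finrank, nsmul_eq_mul]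

theorem finrank_dvd_of_norm_eq_div_pow [IsDomain A] [IsDomain B] [WfDvdMonoid B] {p q : A}
    (hp : Prime (algebraMap A B p)) (hpq : ¬algebraMap A B p ∣ algebraMap A B q) {ℓ : L}
    {k : ℕ} (hℓ : Algebra.norm K ℓ = (algebraMap A K p / algebraMap A K q) ^ k) :
    Module.finrank K L ∣ k := by
  have hAB : Function.Injective (algebraMap A B) := by
    refine Function.Injective.of_comp (f := algebraMap B L) ?_
    rw [← RingHom.coe_comp, ← IsScalarTower.algebraMap_eq, IsScalarTower.algebraMap_eq A K L]
    exact (algebraMap K L).injective.comp (IsFractionRing.injective A K)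
  have hq : algebraMap A K q ≠ 0 := by
    refine (map_ne_zero_iff _ (IsFractionRing.injective A K)).mpr ?_
    rintro rfl
    exact hpq (by simp)
  obtain ⟨y, hy, a, hya⟩ := exists_algebraMap_mul_eq_algebraMap (A := A) (K := K) (B := B) ℓ
  have hnorm : algebraMap A K y ^ Module.finrank K L * algebraMap A K p ^ k =
      algebraMap A K q ^ k * Algebra.norm K (algebraMap B L a) := by
    rw [← hya, map_mul, hℓ, IsScalarTower.algebraMap_apply A K L, Algebra.norm_algebraMap,
      div_pow]
    field_simp
  have key : algebraMap A B y ^ Module.finrank K L * algebraMap A B p ^ k =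
      algebraMap A B q ^ k * ∏ σ : L ≃ₐ[K] L, galRestrict A K L B σ a := by
    apply IsIntegralClosure.algebraMap_injective B A L
    have hnormL := congrArg (algebraMap K L) hnorm
    simp only [map_mul, map_pow, ← IsScalarTower.algebraMap_apply] at hnormL ⊢
    rwa [algebraMap_norm_eq_prod_galRestrict (A := A)] at hnormL
  have hy' : algebraMap A B y ≠ 0 := (map_ne_zero_iff _ hAB).mpr hy
  have ha : a ≠ 0 := by
    rintro rfl
    simp [hy', hp.ne_zero] at key
  exact dvd_of_mul_pow_eq_pow_mul hp hpq key
    (by rw [emultiplicity_pow hp,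
      (FiniteMultiplicity.of_prime_left hp hy').emultiplicity_eq_multiplicity])
    (by rw [emultiplicity_prod_galRestrict hp,
      (FiniteMultiplicity.of_prime_left hp ha).emultiplicity_eq_multiplicity])

end

theorem norm_eq_gamma_pow_implies_n_dvd_general
    (L : Type*) [Field L] [Algebra QadjI L] [FiniteDimensional QadjI L]
    [IsGalois QadjI L] [Algebra GaussianInt L] [IsScalarTower GaussianInt QadjI L]
    (n : ℕ) (hn : Module.finrank QadjI L = n)
    (π : GaussianInt)
    (hinert : Prime ((algebraMap GaussianInt (integralClosure GaussianInt L)) π))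
    (hinert' : Prime ((algebraMap GaussianInt (integralClosure GaussianInt L)) (star π)))
    (hne : Ideal.span {(algebraMap GaussianInt (integralClosure GaussianInt L)) π} ≠
           Ideal.span {(algebraMap GaussianInt (integralClosure GaussianInt L)) (star π)})
    (γ : QadjI)
    (hγ : γ = algebraMap GaussianInt QadjI π / algebraMap GaussianInt QadjI (star π))
    (k : ℕ) (ℓ : L) (hℓ : Algebra.norm QadjI ℓ = γ ^ k) :
    n ∣ k := by
  have : IsNoetherianRing (integralClosure GaussianInt L) :=
    IsIntegralClosure.isNoetherianRing GaussianInt QadjI L _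
  have hndvd : ¬(algebraMap GaussianInt (integralClosure GaussianInt L)) π ∣
      (algebraMap GaussianInt (integralClosure GaussianInt L)) (star π) := fun h =>
    hne (Ideal.span_singleton_eq_span_singleton.mpr
      (hinert.irreducible.associated_of_dvd hinert'.irreducible h))
  rw [← hn]
  exact finrank_dvd_of_norm_eq_div_pow (B := integralClosure GaussianInt L) hinert hndvd (hγ ▸ hℓ)

theorem norm_eq_gamma_pow_implies_n_dvd
    (L : Type*) [Field L] [Algebra QadjI L] [FiniteDimensional QadjI L]
    [IsGalois QadjI L] [Algebra GaussianInt L] [IsScalarTower GaussianInt QadjI L]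
    (n : ℕ) (hn : Module.finrank QadjI L = n)
    (hcyc : IsCyclic (L ≃ₐ[QadjI] L))
    (π : GaussianInt) (hπ : Prime π)
    (hinert : Prime ((algebraMap GaussianInt (integralClosure GaussianInt L)) π))
    (hinert' : Prime ((algebraMap GaussianInt (integralClosure GaussianInt L)) (star π)))
    (hne : Ideal.span {(algebraMap GaussianInt (integralClosure GaussianInt L)) π} ≠
           Ideal.span {(algebraMap GaussianInt (integralClosure GaussianInt L)) (star π)})
    (γ : QadjI)
    (hγ : γ = algebraMap GaussianInt QadjI π / algebraMap GaussianInt QadjI (star π))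
    (k : ℕ) (hk : 1 ≤ k) (ℓ : L) (hℓ : Algebra.norm QadjI ℓ = γ ^ k) :
    n ∣ k :=
  norm_eq_gamma_pow_implies_n_dvd_general L n hn π hinert hinert' hne γ hγ k ℓ hℓ
end
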